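/- arXiv:1510.05177 — 5 statements merged into one kernel-verified Lean document; each statement's English description precedes it below -/
import Mathlib

section
/- Let ū > u̲ > 0 and v̄ > v̲ > 0, and let R = {(u,v) ∈ ℝ² : u ≥ 0, v ≥ 0, u/u̲ + v/v̲ ≥ 1, u/ū + v/v̄ ≤ 1} be the region enclosed by the coordinate axes and the two lines u/ū + v/v̄ = 1 and u/u̲ + v/v̲ = 1. Let f, g be continuous real-valued functions on the closed first quadrant [0,∞)² such that: (i) the zero sets C_f = {(u,v) : u,v ≥ 0, f(u,v) = 0} and C_g = {(u,v) : u,v ≥ 0, g(u,v) = 0} are contained in R; (ii) there exists δ > 0 such that f(u,v) > 0 and g(u,v) > 0 whenever 0 < u < δ and 0 < v < δ; and (iii) there exists M > 0 such that f(u,v) < 0 and g(u,v) < 0 whenever u > M and v > M. Then for any constants α, β > 0, defining F(u,v) = α·u·f(u,v) + β·v·g(u,v), every point (u,v) with u,v ≥ 0, (u,v) ≠ (0,0), and F(u,v) = 0 lies in R. In other words, the curve C_F = {(u,v) : u,v ≥ 0, F(u,v) = 0} lies completely within R, apart from the origin. -/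
/-!
Inside the open quadrant, the region strictly below the line `u/u̲ + v/v̲ = 1` and the region
strictly above `u/ū + v/v̄ = 1` are convex, hence connected, and neither contains a zero of
`f` or `g`. So `f` and `g` keep the sign they have near the origin (positive) on the first
region and the sign they have far out (negative) on the second, and `F` is then nonzero there.
On the axes `F = 0` reduces to `g = 0` or `f = 0`.
-/

theorem IsPreconnected.pos_of_forall_ne_zero {X : Type*} [TopologicalSpace X] {s : Set X}
    (hs : IsPreconnected s) {φ : X → ℝ} (hφ : ContinuousOn φ s) (hne : ∀ p ∈ s, φ p ≠ 0)
    {a : X} (ha : a ∈ s) (hpos : 0 < φ a) {p : X} (hp : p ∈ s) : 0 < φ p := by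
  by_contra! hle
  obtain ⟨q, hq, hq0⟩ := hs.intermediate_value hp ha hφ ⟨hle, hpos.le⟩
  exact hne q hq hq0

theorem IsPreconnected.neg_of_forall_ne_zero {X : Type*} [TopologicalSpace X] {s : Set X}
    (hs : IsPreconnected s) {φ : X → ℝ} (hφ : ContinuousOn φ s) (hne : ∀ p ∈ s, φ p ≠ 0)
    {a : X} (ha : a ∈ s) (hneg : φ a < 0) {p : X} (hp : p ∈ s) : φ p < 0 :=
  neg_pos.1 <| hs.pos_of_forall_ne_zero hφ.neg (fun q hq => neg_ne_zero.2 (hne q hq)) ha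
    (neg_pos.2 hneg) hp

def belowLine (a b : ℝ) : Set (ℝ × ℝ) := {p | 0 < p.1 ∧ 0 < p.2 ∧ p.1 / a + p.2 / b < 1}

def aboveLine (a b : ℝ) : Set (ℝ × ℝ) := {p | 0 < p.1 ∧ 0 < p.2 ∧ 1 < p.1 / a + p.2 / b}

theorem isLinearMap_fst_div_add_snd_div (a b : ℝ) :
    IsLinearMap ℝ (fun p : ℝ × ℝ => p.1 / a + p.2 / b) := by
  convert (a⁻¹ • LinearMap.fst ℝ ℝ ℝ + b⁻¹ • LinearMap.snd ℝ ℝ ℝ).isLinear using 1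
  ext p
  simp [div_eq_inv_mul]

theorem convex_belowLine (a b : ℝ) : Convex ℝ (belowLine a b) :=
  (convex_halfSpace_gt (LinearMap.fst ℝ ℝ ℝ).isLinear 0).inter
    ((convex_halfSpace_gt (LinearMap.snd ℝ ℝ ℝ).isLinear 0).inter
      (convex_halfSpace_lt (isLinearMap_fst_div_add_snd_div a b) 1))

theorem convex_aboveLine (a b : ℝ) : Convex ℝ (aboveLine a b) :=
  (convex_halfSpace_gt (LinearMap.fst ℝ ℝ ℝ).isLinear 0).inter
    ((convex_halfSpace_gt (LinearMap.snd ℝ ℝ ℝ).isLinear 0).inter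
      (convex_halfSpace_gt (isLinearMap_fst_div_add_snd_div a b) 1))

theorem exists_diag_mem_belowLine {a b : ℝ} (ha : 0 < a) (hb : 0 < b) {δ : ℝ} (hδ : 0 < δ) :
    ∃ ε, ε < δ ∧ (ε, ε) ∈ belowLine a b := by
  set ε := min (δ / 2) (min (a / 4) (b / 4))
  have hεa : ε / a ≤ 1 / 4 := by
    rw [div_le_div_iff₀ ha (by norm_num)]
    linarith [min_le_right (δ / 2) (min (a / 4) (b / 4)), min_le_left (a / 4) (b / 4)]
  have hεb : ε / b ≤ 1 / 4 := by
    rw [div_le_div_iff₀ hb (by norm_num)]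
    linarith [min_le_right (δ / 2) (min (a / 4) (b / 4)), min_le_right (a / 4) (b / 4)]
  have hε : 0 < ε := by positivity
  exact ⟨ε, (min_le_left _ _).trans_lt (half_lt_self hδ), hε, hε, by dsimp only; linarith⟩

theorem exists_diag_mem_aboveLine {a b : ℝ} (ha : 0 < a) (hb : 0 < b) (M : ℝ) :
    ∃ K, M < K ∧ (K, K) ∈ aboveLine a b := by
  set K := max M a + 1
  have hKa : a < K := by linarith [le_max_right M a]
  have hK : 0 < K := ha.trans hKa
  refine ⟨K, by linarith [le_max_left M a], hK, hK, ?_⟩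
  have : 1 < K / a := (one_lt_div ha).2 hKa
  dsimp only
  linarith [div_pos hK hb]

section Sign

variable {φ : ℝ × ℝ → ℝ} {a b : ℝ}

theorem pos_of_mem_belowLine (ha : 0 < a) (hb : 0 < b)
    (hφ : ContinuousOn φ {p | 0 ≤ p.1 ∧ 0 ≤ p.2})
    (hzero : {p | 0 ≤ p.1 ∧ 0 ≤ p.2 ∧ φ p = 0} ⊆ {p | 1 ≤ p.1 / a + p.2 / b})
    {δ : ℝ} (hδ : 0 < δ) (hpos : ∀ u v : ℝ, 0 < u → u < δ → 0 < v → v < δ → 0 < φ (u, v))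
    {p : ℝ × ℝ} (hp : p ∈ belowLine a b) : 0 < φ p := by
  obtain ⟨ε, hεδ, hε⟩ := exists_diag_mem_belowLine ha hb hδ
  exact (convex_belowLine a b).isPreconnected.pos_of_forall_ne_zero
    (hφ.mono fun q hq => ⟨hq.1.le, hq.2.1.le⟩)
    (fun q hq h0 => not_le.2 hq.2.2 (hzero ⟨hq.1.le, hq.2.1.le, h0⟩)) hε
    (hpos ε ε hε.1 hεδ hε.1 hεδ) hp

theorem neg_of_mem_aboveLine (ha : 0 < a) (hb : 0 < b)
    (hφ : ContinuousOn φ {p | 0 ≤ p.1 ∧ 0 ≤ p.2})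
    (hzero : {p | 0 ≤ p.1 ∧ 0 ≤ p.2 ∧ φ p = 0} ⊆ {p | p.1 / a + p.2 / b ≤ 1})
    {M : ℝ} (hneg : ∀ u v : ℝ, M < u → M < v → φ (u, v) < 0)
    {p : ℝ × ℝ} (hp : p ∈ aboveLine a b) : φ p < 0 := by
  obtain ⟨K, hMK, hK⟩ := exists_diag_mem_aboveLine ha hb M
  exact (convex_aboveLine a b).isPreconnected.neg_of_forall_ne_zero
    (hφ.mono fun q hq => ⟨hq.1.le, hq.2.1.le⟩)
    (fun q hq h0 => not_le.2 hq.2.2 (hzero ⟨hq.1.le, hq.2.1.le, h0⟩)) hK (hneg K K hMK hMK) hp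

end Sign

/-- The zero set of `F(u,v) = α u f(u,v) + β v g(u,v)` in the closed first
quadrant lies (apart from the origin) within the region `R` enclosed by the coordinate
axes and the lines `u/ū + v/v̄ = 1` and `u/u̲ + v/v̲ = 1`. -/
theorem zero_set_of_F_in_R
    (ubar ulow vbar vlow : ℝ)
    (hulow : 0 < ulow) (hu : ulow < ubar)
    (hvlow : 0 < vlow) (hv : vlow < vbar)
    (R : Set (ℝ × ℝ))
    (hR : R = {p : ℝ × ℝ | 0 ≤ p.1 ∧ 0 ≤ p.2 ∧
      1 ≤ p.1 / ulow + p.2 / vlow ∧ p.1 / ubar + p.2 / vbar ≤ 1})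
    (f g : ℝ → ℝ → ℝ)
    (hfc : ContinuousOn (fun p : ℝ × ℝ => f p.1 p.2) {p | 0 ≤ p.1 ∧ 0 ≤ p.2})
    (hgc : ContinuousOn (fun p : ℝ × ℝ => g p.1 p.2) {p | 0 ≤ p.1 ∧ 0 ≤ p.2})
    (hCf : {p : ℝ × ℝ | 0 ≤ p.1 ∧ 0 ≤ p.2 ∧ f p.1 p.2 = 0} ⊆ R)
    (hCg : {p : ℝ × ℝ | 0 ≤ p.1 ∧ 0 ≤ p.2 ∧ g p.1 p.2 = 0} ⊆ R)
    (hsmall : ∃ δ > 0, ∀ u v : ℝ, 0 < u → u < δ → 0 < v → v < δ →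
      0 < f u v ∧ 0 < g u v)
    (hlarge : ∃ M > 0, ∀ u v : ℝ, M < u → M < v →
      f u v < 0 ∧ g u v < 0)
    (α β : ℝ) (hα : 0 < α) (hβ : 0 < β)
    (u v : ℝ) (hu0 : 0 ≤ u) (hv0 : 0 ≤ v) (hne : (u, v) ≠ (0, 0))
    (hF : α * u * f u v + β * v * g u v = 0) :
    (u, v) ∈ R := by
  subst hR
  obtain ⟨δ, hδ, hpos⟩ := hsmall
  obtain ⟨M, -, hneg⟩ := hlarge
  rcases hu0.eq_or_lt with rfl | hu0
  · have hv_ne : v ≠ 0 := by rintro rfl; exact hne rfl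
    exact hCg ⟨le_rfl, hv0, by simpa [hβ.ne', hv_ne] using hF⟩
  rcases hv0.eq_or_lt with rfl | hv0
  · exact hCf ⟨hu0.le, le_rfl, by simpa [hα.ne', hu0.ne'] using hF⟩
  have hubar : 0 < ubar := hulow.trans hu
  have hvbar : 0 < vbar := hvlow.trans hv
  refine ⟨hu0.le, hv0.le, not_lt.1 fun hlow => ?_, not_lt.1 fun hhigh => ?_⟩
  · have hf := pos_of_mem_belowLine hulow hvlow hfc (hCf.trans fun p hp => hp.2.2.1) hδ
      (fun u v h₁ h₂ h₃ h₄ => (hpos u v h₁ h₂ h₃ h₄).1) ⟨hu0, hv0, hlow⟩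
    have hg := pos_of_mem_belowLine hulow hvlow hgc (hCg.trans fun p hp => hp.2.2.1) hδ
      (fun u v h₁ h₂ h₃ h₄ => (hpos u v h₁ h₂ h₃ h₄).2) ⟨hu0, hv0, hlow⟩
    exact hF.not_gt (by positivity)
  · have hf := neg_of_mem_aboveLine hubar hvbar hfc (hCf.trans fun p hp => hp.2.2.2)
      (fun u v h₁ h₂ => (hneg u v h₁ h₂).1) ⟨hu0, hv0, hhigh⟩
    have hg := neg_of_mem_aboveLine hubar hvbar hgc (hCg.trans fun p hp => hp.2.2.2)
      (fun u v h₁ h₂ => (hneg u v h₁ h₂).2) ⟨hu0, hv0, hhigh⟩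
    have hFneg : α * u * f u v + β * v * g u v < 0 :=
      add_neg (mul_neg_of_pos_of_neg (by positivity) hf) (mul_neg_of_pos_of_neg (by positivity) hg)
    exact hF.not_lt hFneg
end

section
/- (N-barrier maximum principle for two equations: upper bound.) Let d₁, d₂ > 0 and θ ∈ ℝ. Let ū > u̲ > 0 and v̄ > v̲ > 0, and let R = {(u,v) ∈ ℝ² : u ≥ 0, v ≥ 0, u/u̲ + v/v̲ ≥ 1, u/ū + v/v̄ ≤ 1}. Let f, g be continuous real-valued functions on [0,∞)² satisfying: (i) the zero sets {f = 0} and {g = 0} in the closed first quadrant are contained in R; (ii) there exists δ > 0 such that f(u,v), g(u,v) > 0 whenever 0 < u < δ and 0 < v < δ; (iii) there exists M > 0 such that f(u,v), g(u,v) < 0 whenever u > M and v > M. Suppose u, v : ℝ → ℝ are twice continuously differentiable functions with u(x) > 0 and v(x) > 0 for all x ∈ ℝ, satisfying d₁u''(x) + θu'(x) + u(x) f(u(x),v(x)) = 0 and d₂v''(x) + θv'(x) + v(x) g(u(x),v(x)) = 0 for all x ∈ ℝ, and such that (u(x),v(x)) converges as x → −∞ to a point e₋ and as x → +∞ to a point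 e₊, where each of e₋ and e₊ is one of: (0,0); a point (u₁,0) with u₁ > 0 and f(u₁,0) = 0; a point (0,v₂) with v₂ > 0 and g(0,v₂) = 0; or a point (u*,v*) with u*, v* > 0 and f(u*,v*) = g(u*,v*) = 0. Then for every α, β > 0 and every x ∈ ℝ, α·u(x) + β·v(x) ≤ max(α·ū, β·v̄) · max(d₁,d₂)/min(d₁,d₂). -/
open Filter Set Topology

/-!
Write `F = α u + β v` and `λ = max (α ū) (β v̄)`, so that `R ⊆ {α u + β v ≤ λ}`. The zero sets of
`f` and `g` lie in `R`, hence by connectedness `f, g < 0` on the part of the quadrant above the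
line `α u + β v = λ`, and the end states `e₋`, `e₊` lie on or below it.

Suppose `F x` is above a level `c > λ`, and let `[x₁, x₂] ∋ x` be the maximal interval on which
`F ≥ c`. Adding `d₂ α` times the first equation to `d₁ β` times the second shows that the flux
`H = d₁ d₂ F' + θ q`, with `q = d₂ α u + d₁ β v`, has derivative `-(d₂ α u f + d₁ β v g) > 0` there.
Comparing `H` at `x₁` (where `F' ≥ 0`), at an interior maximum `z` of `F` (where `F' = 0`) and at
`x₂` (where `F' ≤ 0`) gives `q z < max (q x₁) (q x₂)` whatever the sign of `θ`. Since
`min d · F ≤ q ≤ max d · F`, this yields `min d · F x ≤ max d · c`; let `c` decrease to `λ`.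
-/

lemma neg_of_isPreconnected_of_ne_zero {X : Type*} [TopologicalSpace X] {s : Set X} {φ : X → ℝ}
    (hs : IsPreconnected s) (hφ : ContinuousOn φ s) (hne : ∀ p ∈ s, φ p ≠ 0)
    {p q : X} (hq : q ∈ s) (hφq : φ q < 0) (hp : p ∈ s) : φ p < 0 := by
  by_contra! h
  obtain ⟨r, hr, hφr⟩ := hs.intermediate_value hq hp hφ ⟨hφq.le, h⟩
  exact hne r hr hφr

lemma neg_of_lt_mul_add_mul {φ : ℝ → ℝ → ℝ} {α β c M : ℝ} (hα : 0 < α) (hβ : 0 < β)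
    (hφ : ContinuousOn (fun p : ℝ × ℝ => φ p.1 p.2) {p | 0 ≤ p.1 ∧ 0 ≤ p.2})
    (hzero : {p : ℝ × ℝ | 0 ≤ p.1 ∧ 0 ≤ p.2 ∧ φ p.1 p.2 = 0} ⊆ {p | α * p.1 + β * p.2 ≤ c})
    (hlarge : ∀ a b, M < a → M < b → φ a b < 0) {a b : ℝ} (ha : 0 ≤ a) (hb : 0 ≤ b)
    (hab : c < α * a + β * b) : φ a b < 0 := by
  set s : Set (ℝ × ℝ) := {p | 0 ≤ p.1 ∧ 0 ≤ p.2 ∧ c < α * p.1 + β * p.2}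
  have hconv : Convex ℝ s := by
    rintro p ⟨hp₁, hp₂, hp⟩ q ⟨hq₁, hq₂, hq⟩ t₁ t₂ ht₁ ht₂ ht
    refine ⟨by simp only [Prod.fst_add, Prod.smul_fst, smul_eq_mul]; positivity,
      by simp only [Prod.snd_add, Prod.smul_snd, smul_eq_mul]; positivity, ?_⟩
    have := convex_Ioi c hp hq ht₁ ht₂ ht
    simp only [Prod.fst_add, Prod.smul_fst, Prod.snd_add, Prod.smul_snd, smul_eq_mul,
      mem_Ioi] at this ⊢
    linarith
  obtain ⟨T, hTM, hT₀, hTc⟩ := ((eventually_gt_atTop M).and ((eventually_ge_atTop 0).and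
    ((tendsto_id.const_mul_atTop (add_pos hα hβ)).eventually_gt_atTop c))).exists
  refine neg_of_isPreconnected_of_ne_zero (p := (a, b)) (q := (T, T)) hconv.isPreconnected
    (hφ.mono fun p hp => ⟨hp.1, hp.2.1⟩) ?_ ⟨hT₀, hT₀, by simpa [add_mul] using hTc⟩
    (hlarge T T hTM hTM) ⟨ha, hb, hab⟩
  rintro p ⟨hp₁, hp₂, hp⟩ hφp
  exact (hzero ⟨hp₁, hp₂, hφp⟩).not_gt hp

lemma mul_add_mul_le_max_of_div_add_div_le_one {α β a b p q : ℝ} (hα : 0 ≤ α)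
    (hp : 0 < p) (hq : 0 < q) (ha : 0 ≤ a) (hb : 0 ≤ b) (h : a / p + b / q ≤ 1) :
    α * a + β * b ≤ max (α * p) (β * q) := by
  have hmax : 0 ≤ max (α * p) (β * q) := le_max_of_le_left (mul_nonneg hα hp.le)
  calc α * a + β * b = α * p * (a / p) + β * q * (b / q) := by field_simp
    _ ≤ max (α * p) (β * q) * (a / p) + max (α * p) (β * q) * (b / q) := by
      gcongr
      · exact le_max_left _ _
      · exact le_max_right _ _
    _ ≤ max (α * p) (β * q) := by
      rw [← mul_add]
      exact mul_le_of_le_one_right hmax h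

lemma mem_of_boundary_state {f g : ℝ → ℝ → ℝ} {S : Set (ℝ × ℝ)} (h₀ : ((0 : ℝ), (0 : ℝ)) ∈ S)
    (hf : {p : ℝ × ℝ | 0 ≤ p.1 ∧ 0 ≤ p.2 ∧ f p.1 p.2 = 0} ⊆ S)
    (hg : {p : ℝ × ℝ | 0 ≤ p.1 ∧ 0 ≤ p.2 ∧ g p.1 p.2 = 0} ⊆ S) {e : ℝ × ℝ}
    (he : e = (0, 0) ∨
      (∃ u₁ : ℝ, 0 < u₁ ∧ f u₁ 0 = 0 ∧ e = (u₁, 0)) ∨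
      (∃ v₂ : ℝ, 0 < v₂ ∧ g 0 v₂ = 0 ∧ e = (0, v₂)) ∨
      (∃ us vs : ℝ, 0 < us ∧ 0 < vs ∧ f us vs = 0 ∧ g us vs = 0 ∧ e = (us, vs))) : e ∈ S := by
  rcases he with rfl | ⟨u₁, hu₁, hf₀, rfl⟩ | ⟨v₂, hv₂, hg₀, rfl⟩ | ⟨us, vs, hus, hvs, hf₀, -, rfl⟩
  · exact h₀
  · exact hf ⟨hu₁.le, le_rfl, hf₀⟩
  · exact hg ⟨le_rfl, hv₂.le, hg₀⟩
  · exact hf ⟨hus.le, hvs.le, hf₀⟩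

lemma IsMinOn.nonneg_of_hasDerivAt_left {F : ℝ → ℝ} {F' a b : ℝ} (hmin : IsMinOn F (Icc a b) a)
    (hab : a < b) (hF : HasDerivAt F F' a) : 0 ≤ F' := by
  have hcone : b - a ∈ posTangentConeAt (Icc a b) a :=
    sub_mem_posTangentConeAt_of_segment_subset (segment_eq_Icc hab.le ▸ Subset.rfl)
  have := hmin.localize.hasFDerivWithinAt_nonneg hF.hasFDerivAt.hasFDerivWithinAt hcone
  simp only [ContinuousLinearMap.toSpanSingleton_apply, smul_eq_mul] at this
  exact nonneg_of_mul_nonneg_right this (sub_pos.2 hab)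

lemma IsMinOn.nonpos_of_hasDerivAt_right {F : ℝ → ℝ} {F' a b : ℝ} (hmin : IsMinOn F (Icc a b) b)
    (hab : a < b) (hF : HasDerivAt F F' b) : F' ≤ 0 := by
  have hcone : a - b ∈ posTangentConeAt (Icc a b) b :=
    sub_mem_posTangentConeAt_of_segment_subset (by rw [segment_symm, segment_eq_Icc hab.le])
  have := hmin.localize.hasFDerivWithinAt_nonneg hF.hasFDerivAt.hasFDerivWithinAt hcone
  simp only [ContinuousLinearMap.toSpanSingleton_apply, smul_eq_mul] at this
  exact nonpos_of_mul_nonneg_right this (sub_neg.2 hab)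

lemma exists_lt_eq_forall_Icc_le {F : ℝ → ℝ} (hF : Continuous F) {c x : ℝ}
    (hbot : ∀ᶠ y in atBot, F y < c) (hx : c < F x) :
    ∃ x₁ < x, F x₁ = c ∧ ∀ y ∈ Icc x₁ x, c ≤ F y := by
  set S := Iic x ∩ F ⁻¹' Iic c
  have hne : S.Nonempty := by
    obtain ⟨y, hy, hyx⟩ := (hbot.and (eventually_le_atBot x)).exists
    exact ⟨y, hyx, hy.le⟩
  have hbdd : BddAbove S := ⟨x, fun y hy => hy.1⟩
  obtain ⟨hx₁x, hFx₁⟩ : sSup S ∈ S :=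
    (isClosed_Iic.inter (isClosed_Iic.preimage hF)).csSup_mem hne hbdd
  have habove : ∀ y ∈ Ioc (sSup S) x, c < F y := fun y hy =>
    lt_of_not_ge fun hFy => (le_csSup hbdd ⟨hy.2, hFy⟩).not_gt hy.1
  have hlt : sSup S < x := hx₁x.lt_of_ne fun h => (h ▸ hFx₁).not_gt hx
  obtain ⟨z, hz, hFz⟩ := intermediate_value_Icc hlt.le hF.continuousOn ⟨hFx₁, hx.le⟩
  have hz₁ : z = sSup S := (hz.1.eq_or_lt.resolve_right fun h => (habove z ⟨h, hz.2⟩).ne' hFz).symm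
  refine ⟨sSup S, hlt, hz₁ ▸ hFz, fun y hy => ?_⟩
  rcases hy.1.eq_or_lt with rfl | h
  · exact (hz₁ ▸ hFz).ge
  · exact (habove y ⟨h, hy.2⟩).le

lemma exists_mem_Ioo_eq_forall_Icc_le {F : ℝ → ℝ} (hF : Continuous F) {c x : ℝ}
    (hbot : ∀ᶠ y in atBot, F y < c) (htop : ∀ᶠ y in atTop, F y < c) (hx : c < F x) :
    ∃ x₁ x₂, x ∈ Ioo x₁ x₂ ∧ F x₁ = c ∧ F x₂ = c ∧ ∀ y ∈ Icc x₁ x₂, c ≤ F y := by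
  obtain ⟨x₁, hx₁, hF₁, hle₁⟩ := exists_lt_eq_forall_Icc_le hF hbot hx
  obtain ⟨x₂, hx₂, hF₂, hle₂⟩ := exists_lt_eq_forall_Icc_le (F := fun y => F (-y))
    (hF.comp continuous_neg) (tendsto_neg_atBot_atTop.eventually htop) (x := -x) (by simpa using hx)
  refine ⟨x₁, -x₂, ⟨hx₁, lt_neg_of_lt_neg hx₂⟩, hF₁, hF₂, fun y hy => ?_⟩
  rcases le_total y x with h | h
  · exact hle₁ y ⟨hy.1, h⟩
  · simpa using hle₂ (-y) ⟨le_neg_of_le_neg hy.2, neg_le_neg h⟩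

lemma min_mul_add_le {d₁ d₂ a b : ℝ} (ha : 0 ≤ a) (hb : 0 ≤ b) :
    min d₁ d₂ * (a + b) ≤ d₂ * a + d₁ * b := by
  nlinarith [mul_le_mul_of_nonneg_right (min_le_right d₁ d₂) ha,
    mul_le_mul_of_nonneg_right (min_le_left d₁ d₂) hb]

lemma add_le_max_mul_add {d₁ d₂ a b : ℝ} (ha : 0 ≤ a) (hb : 0 ≤ b) :
    d₂ * a + d₁ * b ≤ max d₁ d₂ * (a + b) := by
  nlinarith [mul_le_mul_of_nonneg_right (le_max_right d₁ d₂) ha,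
    mul_le_mul_of_nonneg_right (le_max_left d₁ d₂) hb]

lemma lt_max_of_strictMonoOn_add_mul {F' q : ℝ → ℝ} {d θ x₁ z x₂ : ℝ} (hd : 0 ≤ d)
    (hH : StrictMonoOn (fun y => d * F' y + θ * q y) (Icc x₁ x₂)) (hz : z ∈ Ioo x₁ x₂)
    (h₁ : 0 ≤ F' x₁) (hz₀ : F' z = 0) (h₂ : F' x₂ ≤ 0) : q z < max (q x₁) (q x₂) := by
  have hlt₁ := hH (left_mem_Icc.2 (hz.1.trans hz.2).le) (Ioo_subset_Icc_self hz) hz.1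
  have hlt₂ := hH (Ioo_subset_Icc_self hz) (right_mem_Icc.2 (hz.1.trans hz.2).le) hz.2
  simp only [hz₀, mul_zero, zero_add] at hlt₁ hlt₂
  have hθ₁ : θ * q x₁ < θ * q z := by nlinarith [mul_nonneg hd h₁]
  have hθ₂ : θ * q z < θ * q x₂ := by nlinarith [mul_nonneg hd (neg_nonneg.2 h₂)]
  rcases lt_trichotomy θ 0 with hθ | rfl | hθ
  · exact lt_max_of_lt_left (lt_of_mul_lt_mul_of_nonpos_left hθ₁ hθ.le)
  · simp at hθ₁
  · exact lt_max_of_lt_right (lt_of_mul_lt_mul_left hθ₂ hθ.le)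

section TravelingWave

variable {d₁ d₂ θ α β : ℝ} {u v r₁ r₂ : ℝ → ℝ}

lemma hasDerivAt_flux (hu : ContDiff ℝ 2 u) (hv : ContDiff ℝ 2 v)
    (hueq : ∀ x, d₁ * deriv (deriv u) x + θ * deriv u x + r₁ x = 0)
    (hveq : ∀ x, d₂ * deriv (deriv v) x + θ * deriv v x + r₂ x = 0) (x : ℝ) :
    HasDerivAt (fun y => d₁ * d₂ * (α * deriv u y + β * deriv v y) +
      θ * (d₂ * (α * u y) + d₁ * (β * v y))) (-(d₂ * (α * r₁ x) + d₁ * (β * r₂ x))) x := by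
  have hu' := (hu.differentiable_deriv_two x).hasDerivAt
  have hv' := (hv.differentiable_deriv_two x).hasDerivAt
  have hu₁ := (hu.differentiable two_ne_zero x).hasDerivAt
  have hv₁ := (hv.differentiable two_ne_zero x).hasDerivAt
  refine ((((hu'.const_mul α).add (hv'.const_mul β)).const_mul (d₁ * d₂)).add
    ((((hu₁.const_mul α).const_mul d₂).add ((hv₁.const_mul β).const_mul d₁)).const_mul θ)
    ).congr_deriv ?_
  linear_combination α * d₂ * hueq x + β * d₁ * hveq x

lemma strictMonoOn_flux (hd₁ : 0 < d₁) (hd₂ : 0 < d₂) (hα : 0 < α) (hβ : 0 < β)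
    (hu : ContDiff ℝ 2 u) (hv : ContDiff ℝ 2 v)
    (hueq : ∀ x, d₁ * deriv (deriv u) x + θ * deriv u x + r₁ x = 0)
    (hveq : ∀ x, d₂ * deriv (deriv v) x + θ * deriv v x + r₂ x = 0) {s : Set ℝ}
    (hs : Convex ℝ s) (hneg : ∀ y ∈ s, r₁ y < 0 ∧ r₂ y < 0) :
    StrictMonoOn (fun y => d₁ * d₂ * (α * deriv u y + β * deriv v y) +
      θ * (d₂ * (α * u y) + d₁ * (β * v y))) s := by
  refine strictMonoOn_of_hasDerivWithinAt_pos hs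
    (fun y _ => (hasDerivAt_flux hu hv hueq hveq y).continuousAt.continuousWithinAt)
    (fun y _ => (hasDerivAt_flux hu hv hueq hveq y).hasDerivWithinAt) fun y hy => ?_
  obtain ⟨h₁, h₂⟩ := hneg y (interior_subset hy)
  nlinarith [mul_pos hd₂ (mul_pos hα (neg_pos.2 h₁)), mul_pos hd₁ (mul_pos hβ (neg_pos.2 h₂))]

lemma min_mul_le_max_mul_of_level (hd₁ : 0 < d₁) (hd₂ : 0 < d₂) (hα : 0 < α) (hβ : 0 < β)
    (hu : ContDiff ℝ 2 u) (hv : ContDiff ℝ 2 v) (hu₀ : ∀ x, 0 ≤ u x) (hv₀ : ∀ x, 0 ≤ v x)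
    (hueq : ∀ x, d₁ * deriv (deriv u) x + θ * deriv u x + r₁ x = 0)
    (hveq : ∀ x, d₂ * deriv (deriv v) x + θ * deriv v x + r₂ x = 0) {c : ℝ}
    (hbot : ∀ᶠ y in atBot, α * u y + β * v y < c) (htop : ∀ᶠ y in atTop, α * u y + β * v y < c)
    (hsign : ∀ y, c ≤ α * u y + β * v y → r₁ y < 0 ∧ r₂ y < 0) (x : ℝ) :
    min d₁ d₂ * (α * u x + β * v x) ≤ max d₁ d₂ * c := by
  set F := fun y => α * u y + β * v y
  have hαu y : 0 ≤ α * u y := mul_nonneg hα.le (hu₀ y)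
  have hβv y : 0 ≤ β * v y := mul_nonneg hβ.le (hv₀ y)
  have hm : 0 < min d₁ d₂ := lt_min hd₁ hd₂
  rcases le_or_gt (F x) c with hxc | hxc
  · calc min d₁ d₂ * F x ≤ min d₁ d₂ * c := by gcongr
      _ ≤ max d₁ d₂ * c := by
        gcongr
        · exact (add_nonneg (hαu x) (hβv x)).trans hxc
        · exact min_le_max
  have hFd y : HasDerivAt F (α * deriv u y + β * deriv v y) y :=
    ((hu.differentiable (by norm_num) y).hasDerivAt.const_mul α).add
      ((hv.differentiable (by norm_num) y).hasDerivAt.const_mul β)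
  have hFc : Continuous F := continuous_iff_continuousAt.2 fun y => (hFd y).continuousAt
  obtain ⟨x₁, x₂, hx, hF₁, hF₂, hle⟩ := exists_mem_Ioo_eq_forall_Icc_le hFc hbot htop hxc
  have hx₁₂ : x₁ < x₂ := hx.1.trans hx.2
  obtain ⟨z, hz, hzmax⟩ := isCompact_Icc.exists_isMaxOn (nonempty_Icc.2 hx₁₂.le) hFc.continuousOn
  have hxz : F x ≤ F z := hzmax (Ioo_subset_Icc_self hx)
  have hz' : z ∈ Ioo x₁ x₂ :=
    ⟨hz.1.lt_of_ne (by rintro rfl; linarith), hz.2.lt_of_ne (by rintro rfl; linarith)⟩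
  have hH := strictMonoOn_flux hd₁ hd₂ hα hβ hu hv hueq hveq (convex_Icc x₁ x₂)
    fun y hy => hsign y (hle y hy)
  have hmin₁ : IsMinOn F (Icc x₁ x₂) x₁ := fun y hy => hF₁ ▸ hle y hy
  have hmin₂ : IsMinOn F (Icc x₁ x₂) x₂ := fun y hy => hF₂ ▸ hle y hy
  have hq := lt_max_of_strictMonoOn_add_mul (mul_pos hd₁ hd₂).le hH hz'
    (hmin₁.nonneg_of_hasDerivAt_left hx₁₂ (hFd x₁))
    ((hzmax.isLocalMax (Icc_mem_nhds hz'.1 hz'.2)).hasDerivAt_eq_zero (hFd z))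
    (hmin₂.nonpos_of_hasDerivAt_right hx₁₂ (hFd x₂))
  calc min d₁ d₂ * F x ≤ min d₁ d₂ * F z := by gcongr
    _ ≤ d₂ * (α * u z) + d₁ * (β * v z) := min_mul_add_le (hαu z) (hβv z)
    _ ≤ max (d₂ * (α * u x₁) + d₁ * (β * v x₁)) (d₂ * (α * u x₂) + d₁ * (β * v x₂)) := hq.le
    _ ≤ max d₁ d₂ * c :=
      max_le ((add_le_max_mul_add (hαu x₁) (hβv x₁)).trans_eq (congrArg _ hF₁))
        ((add_le_max_mul_add (hαu x₂) (hβv x₂)).trans_eq (congrArg _ hF₂))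

lemma min_mul_le_max_mul_of_barrier (hd₁ : 0 < d₁) (hd₂ : 0 < d₂) (hα : 0 < α) (hβ : 0 < β)
    (hu : ContDiff ℝ 2 u) (hv : ContDiff ℝ 2 v) (hu₀ : ∀ x, 0 ≤ u x) (hv₀ : ∀ x, 0 ≤ v x)
    (hueq : ∀ x, d₁ * deriv (deriv u) x + θ * deriv u x + r₁ x = 0)
    (hveq : ∀ x, d₂ * deriv (deriv v) x + θ * deriv v x + r₂ x = 0) {a b lam : ℝ}
    (hbot : Tendsto (fun y => α * u y + β * v y) atBot (𝓝 a)) (ha : a ≤ lam)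
    (htop : Tendsto (fun y => α * u y + β * v y) atTop (𝓝 b)) (hb : b ≤ lam)
    (hsign : ∀ y, lam < α * u y + β * v y → r₁ y < 0 ∧ r₂ y < 0) (x : ℝ) :
    min d₁ d₂ * (α * u x + β * v x) ≤ max d₁ d₂ * lam := by
  have hM : 0 < max d₁ d₂ := lt_max_of_lt_left hd₁
  rw [← div_le_iff₀' hM]
  refine le_of_forall_gt_imp_ge_of_dense fun c hc => (div_le_iff₀' hM).2 ?_
  exact min_mul_le_max_mul_of_level hd₁ hd₂ hα hβ hu hv hu₀ hv₀ hueq hveq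
    (hbot.eventually_lt_const (ha.trans_lt hc)) (htop.eventually_lt_const (hb.trans_lt hc))
    (fun y hy => hsign y (hc.trans_le hy)) x

end TravelingWave

theorem NBMP_two_equations_upper_bound_general
    (d₁ d₂ θ : ℝ) (hd₁ : 0 < d₁) (hd₂ : 0 < d₂)
    (ubar ulow vbar vlow : ℝ)
    (hulow : 0 < ulow) (huu : ulow < ubar)
    (hvlow : 0 < vlow) (hvv : vlow < vbar)
    (R : Set (ℝ × ℝ))
    (hR : R = {p : ℝ × ℝ | 0 ≤ p.1 ∧ 0 ≤ p.2 ∧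
      1 ≤ p.1 / ulow + p.2 / vlow ∧ p.1 / ubar + p.2 / vbar ≤ 1})
    (f g : ℝ → ℝ → ℝ)
    (hfc : ContinuousOn (fun p : ℝ × ℝ => f p.1 p.2) {p | 0 ≤ p.1 ∧ 0 ≤ p.2})
    (hgc : ContinuousOn (fun p : ℝ × ℝ => g p.1 p.2) {p | 0 ≤ p.1 ∧ 0 ≤ p.2})
    (hCf : {p : ℝ × ℝ | 0 ≤ p.1 ∧ 0 ≤ p.2 ∧ f p.1 p.2 = 0} ⊆ R)
    (hCg : {p : ℝ × ℝ | 0 ≤ p.1 ∧ 0 ≤ p.2 ∧ g p.1 p.2 = 0} ⊆ R)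
    (hlarge : ∃ M > 0, ∀ u v : ℝ, M < u → M < v →
      f u v < 0 ∧ g u v < 0)
    (u v : ℝ → ℝ)
    (hu : ContDiff ℝ 2 u) (hv : ContDiff ℝ 2 v)
    (hupos : ∀ x, 0 < u x) (hvpos : ∀ x, 0 < v x)
    (hueq : ∀ x, d₁ * deriv (deriv u) x + θ * deriv u x + u x * f (u x) (v x) = 0)
    (hveq : ∀ x, d₂ * deriv (deriv v) x + θ * deriv v x + v x * g (u x) (v x) = 0)
    (eminus eplus : ℝ × ℝ)
    (hlimminus : Tendsto (fun x => (u x, v x)) atBot (nhds eminus))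
    (hlimplus : Tendsto (fun x => (u x, v x)) atTop (nhds eplus))
    (heminus : eminus = (0, 0) ∨
      (∃ u₁ : ℝ, 0 < u₁ ∧ f u₁ 0 = 0 ∧ eminus = (u₁, 0)) ∨
      (∃ v₂ : ℝ, 0 < v₂ ∧ g 0 v₂ = 0 ∧ eminus = (0, v₂)) ∨
      (∃ us vs : ℝ, 0 < us ∧ 0 < vs ∧ f us vs = 0 ∧ g us vs = 0 ∧ eminus = (us, vs)))
    (heplus : eplus = (0, 0) ∨
      (∃ u₁ : ℝ, 0 < u₁ ∧ f u₁ 0 = 0 ∧ eplus = (u₁, 0)) ∨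
      (∃ v₂ : ℝ, 0 < v₂ ∧ g 0 v₂ = 0 ∧ eplus = (0, v₂)) ∨
      (∃ us vs : ℝ, 0 < us ∧ 0 < vs ∧ f us vs = 0 ∧ g us vs = 0 ∧ eplus = (us, vs)))
    (α β : ℝ) (hα : 0 < α) (hβ : 0 < β) (x : ℝ) :
    α * u x + β * v x ≤ max (α * ubar) (β * vbar) * (max d₁ d₂ / min d₁ d₂) := by
  set lam := max (α * ubar) (β * vbar)
  set S : Set (ℝ × ℝ) := {p | α * p.1 + β * p.2 ≤ lam}
  have hub : 0 < ubar := hulow.trans huu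
  have hRS : R ⊆ S := by
    rw [hR]
    rintro p ⟨hp₁, hp₂, -, hp⟩
    exact mul_add_mul_le_max_of_div_add_div_le_one hα.le hub (hvlow.trans hvv) hp₁ hp₂ hp
  have h₀ : ((0 : ℝ), (0 : ℝ)) ∈ S := by simpa [S, lam] using le_max_of_le_left (mul_pos hα hub).le
  obtain ⟨M, -, hM⟩ := hlarge
  have hsign y (hy : lam < α * u y + β * v y) :
      u y * f (u y) (v y) < 0 ∧ v y * g (u y) (v y) < 0 :=
    ⟨mul_neg_of_pos_of_neg (hupos y) (neg_of_lt_mul_add_mul hα hβ hfc (hCf.trans hRS)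
        (fun a b ha hb => (hM a b ha hb).1) (hupos y).le (hvpos y).le hy),
      mul_neg_of_pos_of_neg (hvpos y) (neg_of_lt_mul_add_mul hα hβ hgc (hCg.trans hRS)
        (fun a b ha hb => (hM a b ha hb).2) (hupos y).le (hvpos y).le hy)⟩
  have hline : Continuous fun p : ℝ × ℝ => α * p.1 + β * p.2 := by fun_prop
  have hbarrier := min_mul_le_max_mul_of_barrier hd₁ hd₂ hα hβ hu hv (fun y => (hupos y).le)
    (fun y => (hvpos y).le) hueq hveq ((hline.tendsto _).comp hlimminus)
    (mem_of_boundary_state h₀ (hCf.trans hRS) (hCg.trans hRS) heminus)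
    ((hline.tendsto _).comp hlimplus)
    (mem_of_boundary_state h₀ (hCf.trans hRS) (hCg.trans hRS) heplus) hsign x
  rw [mul_div_assoc', le_div_iff₀ (lt_min hd₁ hd₂)]
  linarith

/-- N-barrier maximum principle for two equations, upper bound. -/
theorem NBMP_two_equations_upper_bound
    (d₁ d₂ θ : ℝ) (hd₁ : 0 < d₁) (hd₂ : 0 < d₂)
    (ubar ulow vbar vlow : ℝ)
    (hulow : 0 < ulow) (huu : ulow < ubar)
    (hvlow : 0 < vlow) (hvv : vlow < vbar)
    (R : Set (ℝ × ℝ))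
    (hR : R = {p : ℝ × ℝ | 0 ≤ p.1 ∧ 0 ≤ p.2 ∧
      1 ≤ p.1 / ulow + p.2 / vlow ∧ p.1 / ubar + p.2 / vbar ≤ 1})
    (f g : ℝ → ℝ → ℝ)
    (hfc : ContinuousOn (fun p : ℝ × ℝ => f p.1 p.2) {p | 0 ≤ p.1 ∧ 0 ≤ p.2})
    (hgc : ContinuousOn (fun p : ℝ × ℝ => g p.1 p.2) {p | 0 ≤ p.1 ∧ 0 ≤ p.2})
    (hCf : {p : ℝ × ℝ | 0 ≤ p.1 ∧ 0 ≤ p.2 ∧ f p.1 p.2 = 0} ⊆ R)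
    (hCg : {p : ℝ × ℝ | 0 ≤ p.1 ∧ 0 ≤ p.2 ∧ g p.1 p.2 = 0} ⊆ R)
    (hsmall : ∃ δ > 0, ∀ u v : ℝ, 0 < u → u < δ → 0 < v → v < δ →
      0 < f u v ∧ 0 < g u v)
    (hlarge : ∃ M > 0, ∀ u v : ℝ, M < u → M < v →
      f u v < 0 ∧ g u v < 0)
    (u v : ℝ → ℝ)
    (hu : ContDiff ℝ 2 u) (hv : ContDiff ℝ 2 v)
    (hupos : ∀ x, 0 < u x) (hvpos : ∀ x, 0 < v x)
    (hueq : ∀ x, d₁ * deriv (deriv u) x + θ * deriv u x + u x * f (u x) (v x) = 0)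
    (hveq : ∀ x, d₂ * deriv (deriv v) x + θ * deriv v x + v x * g (u x) (v x) = 0)
    (eminus eplus : ℝ × ℝ)
    (hlimminus : Tendsto (fun x => (u x, v x)) atBot (nhds eminus))
    (hlimplus : Tendsto (fun x => (u x, v x)) atTop (nhds eplus))
    (heminus : eminus = (0, 0) ∨
      (∃ u₁ : ℝ, 0 < u₁ ∧ f u₁ 0 = 0 ∧ eminus = (u₁, 0)) ∨
      (∃ v₂ : ℝ, 0 < v₂ ∧ g 0 v₂ = 0 ∧ eminus = (0, v₂)) ∨
      (∃ us vs : ℝ, 0 < us ∧ 0 < vs ∧ f us vs = 0 ∧ g us vs = 0 ∧ eminus = (us, vs)))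
    (heplus : eplus = (0, 0) ∨
      (∃ u₁ : ℝ, 0 < u₁ ∧ f u₁ 0 = 0 ∧ eplus = (u₁, 0)) ∨
      (∃ v₂ : ℝ, 0 < v₂ ∧ g 0 v₂ = 0 ∧ eplus = (0, v₂)) ∨
      (∃ us vs : ℝ, 0 < us ∧ 0 < vs ∧ f us vs = 0 ∧ g us vs = 0 ∧ eplus = (us, vs)))
    (α β : ℝ) (hα : 0 < α) (hβ : 0 < β) (x : ℝ) :
    α * u x + β * v x ≤ max (α * ubar) (β * vbar) * (max d₁ d₂ / min d₁ d₂) :=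
  NBMP_two_equations_upper_bound_general d₁ d₂ θ hd₁ hd₂ ubar ulow vbar vlow hulow huu hvlow hvv R
    hR f g hfc hgc hCf hCg hlarge u v hu hv hupos hvpos hueq hveq eminus eplus hlimminus hlimplus
    heminus heplus α β hα hβ x
end

section
/- (N-barrier maximum principle for two equations: lower bound.) Let d₁, d₂ > 0 and θ ∈ ℝ. Let ū > u̲ > 0 and v̄ > v̲ > 0, and let R = {(u,v) ∈ ℝ² : u ≥ 0, v ≥ 0, u/u̲ + v/v̲ ≥ 1, u/ū + v/v̄ ≤ 1}. Let f, g be continuous real-valued functions on [0,∞)² satisfying: (i) the zero sets {f = 0} and {g = 0} in the closed first quadrant are contained in R; (ii) there exists δ > 0 such that f(u,v), g(u,v) > 0 whenever 0 < u < δ and 0 < v < δ; (iii) there exists M > 0 such that f(u,v), g(u,v) < 0 whenever u > M and v > M. Suppose u, v : ℝ → ℝ are twice continuously differentiable functions with u(x) > 0 and v(x) > 0 for all x ∈ ℝ, satisfying d₁u''(x) + θu'(x) + u(x) f(u(x),v(x)) = 0 and d₂v''(x) + θv'(x) + v(x) g(u(x),v(x)) = 0 for all x ∈ ℝ, and such that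 (u(x),v(x)) converges as x → −∞ to a point e₋ and as x → +∞ to a point e₊, where each of e₋ and e₊ is one of: a point (u₁,0) with u₁ > 0 and f(u₁,0) = 0; a point (0,v₂) with v₂ > 0 and g(0,v₂) = 0; or a point (u*,v*) with u*, v* > 0 and f(u*,v*) = g(u*,v*) = 0 (in particular, neither e₋ nor e₊ is the extinction state (0,0)). Then for every α, β > 0 and every x ∈ ℝ, α·u(x) + β·v(x) ≥ min(α·u̲, β·v̲) · min(d₁,d₂)/max(d₁,d₂). -/
/-!
Write `p = α u + β v`, `q = α d₁ u + β d₂ v` and call `q' = α d₁ u' + β d₂ v'` the flux; let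
`m = min (α u̲) (β v̲)`. Since the zeros of `f` and `g` lie in `R`, above the line `p = m`, the
intermediate value theorem makes `f, g > 0` below it, and the boundary states have `p ≥ m`.
Where `p < m` the equations give `(q' + θ p)' = -(α u f + β v g) < 0`.

Reflecting `x ↦ -x` and swapping the species, assume `θ ≤ 0` and `d₁ ≤ d₂`, so `d₁ p ≤ q ≤ d₂ p`.
If `p < m d₁ / d₂` somewhere, take a global minimum `z₀` of `p`; then `q(z₀) < d₁ m`. Comparing
`q' + θ p` at `z₀` with its value at the last point on the left where `q` climbs back to a level
`c < d₁ m` shows `q'(z₀) < 0`. At the first point `z > z₀` where `q = c` the flux is `≥ 0`; but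
going left from `z₀` to the last point `w` where `p = p(z)`, `u' > 0` persists (because
`exp (θ x / d₁) u'` decreases) and `p'(w) ≤ 0`, so `q'(w) ≤ 0`, and comparing `w` with `z` gives
`q'(z) < 0`.
-/

open Filter Set Topology

theorem HasDerivAt.nonpos_of_forall_Ioc_le {φ : ℝ → ℝ} {φ' w z : ℝ}
    (hφ : HasDerivAt φ φ' w) (hwz : w < z) (hle : ∀ x ∈ Ioc w z, φ x ≤ φ w) : φ' ≤ 0 := by
  have hslope : Tendsto (slope φ w) (𝓝[>] w) (𝓝 φ') :=
    (hasDerivWithinAt_iff_tendsto_slope' (s := Ioi w) (lt_irrefl w)).mp hφ.hasDerivWithinAt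
  refine le_of_tendsto hslope ?_
  filter_upwards [Ioo_mem_nhdsGT hwz] with x hx
  exact (slope_nonpos_iff_of_le hx.1.le).mpr (hle x ⟨hx.1, hx.2.le⟩)

theorem HasDerivAt.nonneg_of_forall_Ico_le {φ : ℝ → ℝ} {φ' w z : ℝ}
    (hφ : HasDerivAt φ φ' z) (hwz : w < z) (hle : ∀ x ∈ Ico w z, φ x ≤ φ z) : 0 ≤ φ' := by
  have hslope : Tendsto (slope φ z) (𝓝[<] z) (𝓝 φ') :=
    (hasDerivWithinAt_iff_tendsto_slope' (s := Iio z) (lt_irrefl z)).mp hφ.hasDerivWithinAt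
  refine ge_of_tendsto hslope ?_
  filter_upwards [Ioo_mem_nhdsLT hwz] with x hx
  rw [slope_comm]
  exact (slope_nonneg_iff_of_le hx.2.le).mpr (hle x ⟨hx.1.le, hx.2⟩)

theorem strictAntiOn_Icc_of_hasDerivAt_neg {φ φ' : ℝ → ℝ} {a b : ℝ}
    (hφ : ∀ x, HasDerivAt φ (φ' x) x) (hneg : ∀ x ∈ Ioo a b, φ' x < 0) :
    StrictAntiOn φ (Icc a b) :=
  strictAntiOn_of_hasDerivWithinAt_neg (convex_Icc a b)
    (HasDerivAt.continuousOn fun x _ => hφ x) (fun x _ => (hφ x).hasDerivWithinAt)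
    (by simpa only [interior_Icc] using hneg)

theorem exists_eq_and_forall_Ioc_lt {φ : ℝ → ℝ} (hφ : Continuous φ) {c y z : ℝ} (hyz : y ≤ z)
    (hy : c ≤ φ y) (hz : φ z ≤ c) : ∃ w ∈ Icc y z, φ w = c ∧ ∀ x ∈ Ioc w z, φ x < c := by
  obtain ⟨w, ⟨hw, hcw⟩, hgreatest⟩ :=
    (isCompact_Icc.inter_right (isClosed_le continuous_const hφ)).exists_isGreatest
      ⟨y, ⟨le_rfl, hyz⟩, hy⟩
  have hlast : ∀ x ∈ Ioc w z, φ x < c := fun x hx =>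
    not_le.mp fun hcx => hx.1.not_ge (hgreatest ⟨⟨hw.1.trans hx.1.le, hx.2⟩, hcx⟩)
  obtain ⟨x, hx, hφx⟩ := intermediate_value_Icc' hw.2 hφ.continuousOn ⟨hz, hcw⟩
  obtain rfl | hwx := hx.1.eq_or_lt
  · exact ⟨w, hw, hφx, hlast⟩
  · exact absurd hφx (hlast x ⟨hwx, hx.2⟩).ne

theorem exists_eq_and_forall_Ico_lt {φ : ℝ → ℝ} (hφ : Continuous φ) {c y z : ℝ} (hzy : z ≤ y)
    (hy : c ≤ φ y) (hz : φ z ≤ c) : ∃ w ∈ Icc z y, φ w = c ∧ ∀ x ∈ Ico z w, φ x < c := by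
  obtain ⟨w, ⟨hw, hcw⟩, hleast⟩ :=
    (isCompact_Icc.inter_right (isClosed_le continuous_const hφ)).exists_isLeast
      ⟨y, ⟨hzy, le_rfl⟩, hy⟩
  have hfirst : ∀ x ∈ Ico z w, φ x < c := fun x hx =>
    not_le.mp fun hcx => hx.2.not_ge (hleast ⟨⟨hx.1, hx.2.le.trans hw.2⟩, hcx⟩)
  obtain ⟨x, hx, hφx⟩ := intermediate_value_Icc hw.1 hφ.continuousOn ⟨hz, hcw⟩
  obtain rfl | hxw := hx.2.eq_or_lt
  · exact ⟨x, hw, hφx, hfirst⟩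
  · exact absurd hφx (hfirst x ⟨hx.1, hxw⟩).ne

theorem deriv_deriv_comp_neg (u : ℝ → ℝ) (x : ℝ) :
    deriv (deriv fun y => u (-y)) x = deriv (deriv u) (-x) := by
  have h : deriv (fun y => u (-y)) = fun y => -deriv u (-y) := funext fun y => deriv_comp_neg u y
  rw [h, deriv.fun_neg, deriv_comp_neg, neg_neg]

theorem min_diffusivity_mul_le {d₁ d₂ α β x y : ℝ} (hd : d₁ ≤ d₂) (hβ : 0 ≤ β) (hy : 0 ≤ y) :
    d₁ * (α * x + β * y) ≤ α * d₁ * x + β * d₂ * y := by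
  nlinarith [mul_nonneg (mul_nonneg (sub_nonneg.2 hd) hβ) hy]

theorem le_max_diffusivity_mul {d₁ d₂ α β x y : ℝ} (hd : d₁ ≤ d₂) (hα : 0 ≤ α) (hx : 0 ≤ x) :
    α * d₁ * x + β * d₂ * y ≤ d₂ * (α * x + β * y) := by
  nlinarith [mul_nonneg (mul_nonneg (sub_nonneg.2 hd) hα) hx]

theorem pos_of_flux_neg {d₁ d₂ α β x y : ℝ} (hd : d₁ ≤ d₂) (hα : 0 < α)
    (hsum : α * x + β * y = 0) (hflux : α * d₁ * x + β * d₂ * y < 0) : 0 < x := by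
  have hsplit : α * d₁ * x + β * d₂ * y = (d₂ - d₁) * (β * y) := by
    linear_combination d₁ * hsum
  have hy : β * y < 0 := by
    by_contra! hy
    nlinarith [mul_nonneg (sub_nonneg.2 hd) hy]
  exact pos_of_mul_pos_right (by linarith : 0 < α * x) hα.le

theorem flux_nonpos_of_nonneg {d₁ d₂ α β x y : ℝ} (hd₁ : 0 ≤ d₁) (hd : d₁ ≤ d₂) (hα : 0 ≤ α)
    (hx : 0 ≤ x) (hsum : α * x + β * y ≤ 0) : α * d₁ * x + β * d₂ * y ≤ 0 := by
  nlinarith [mul_nonneg hα hx, mul_nonneg (sub_nonneg.2 hd) (mul_nonneg hα hx)]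

theorem hasDerivAt_mul_add_mul {u v : ℝ → ℝ} {x : ℝ} (hu : DifferentiableAt ℝ u x)
    (hv : DifferentiableAt ℝ v x) (A B : ℝ) :
    HasDerivAt (fun y => A * u y + B * v y) (A * deriv u x + B * deriv v x) x :=
  (hu.hasDerivAt.const_mul A).add (hv.hasDerivAt.const_mul B)

namespace TravelingWave

variable {d₁ d₂ θ α β m : ℝ} {u v a b : ℝ → ℝ}

theorem strictAntiOn_flux_add_drift (hu : ContDiff ℝ 2 u) (hv : ContDiff ℝ 2 v)
    (hueq : ∀ x, d₁ * deriv (deriv u) x + θ * deriv u x + a x = 0)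
    (hveq : ∀ x, d₂ * deriv (deriv v) x + θ * deriv v x + b x = 0) {w z : ℝ}
    (hsource : ∀ x ∈ Ioo w z, 0 < α * a x + β * b x) :
    StrictAntiOn
      (fun x => α * d₁ * deriv u x + β * d₂ * deriv v x + θ * (α * u x + β * v x)) (Icc w z) := by
  refine strictAntiOn_Icc_of_hasDerivAt_neg (φ' := fun x => -(α * a x + β * b x))
    (fun x => ?_) fun x hx => neg_neg_of_pos (hsource x hx)
  have hflux := hasDerivAt_mul_add_mul (hu.differentiable_deriv_two x)
    (hv.differentiable_deriv_two x) (α * d₁) (β * d₂)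
  have hsum := hasDerivAt_mul_add_mul (hu.differentiable two_ne_zero x)
    (hv.differentiable two_ne_zero x) α β
  exact (hflux.add (hsum.const_mul θ)).congr_deriv
    (by linear_combination α * hueq x + β * hveq x)

theorem flux_lt_of_le (hθ : θ ≤ 0) (hu : ContDiff ℝ 2 u) (hv : ContDiff ℝ 2 v)
    (hueq : ∀ x, d₁ * deriv (deriv u) x + θ * deriv u x + a x = 0)
    (hveq : ∀ x, d₂ * deriv (deriv v) x + θ * deriv v x + b x = 0) {w z : ℝ} (hwz : w < z)
    (hsource : ∀ x ∈ Ioo w z, 0 < α * a x + β * b x)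
    (hle : α * u z + β * v z ≤ α * u w + β * v w) :
    α * d₁ * deriv u z + β * d₂ * deriv v z < α * d₁ * deriv u w + β * d₂ * deriv v w := by
  have hanti := strictAntiOn_flux_add_drift hu hv hueq hveq hsource
    (left_mem_Icc.2 hwz.le) (right_mem_Icc.2 hwz.le) hwz
  linarith [mul_le_mul_of_nonpos_left hle hθ]

theorem strictAntiOn_exp_mul_deriv (hd₁ : 0 < d₁) (hu : ContDiff ℝ 2 u)
    (hueq : ∀ x, d₁ * deriv (deriv u) x + θ * deriv u x + a x = 0) {w z : ℝ}
    (ha : ∀ x ∈ Ioo w z, 0 < a x) :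
    StrictAntiOn (fun x => Real.exp (θ * x / d₁) * deriv u x) (Icc w z) := by
  refine strictAntiOn_Icc_of_hasDerivAt_neg
    (φ' := fun x => -(Real.exp (θ * x / d₁) / d₁ * a x)) (fun x => ?_)
    fun x hx => neg_neg_of_pos (by have := ha x hx; positivity)
  have hexp : HasDerivAt (fun y => Real.exp (θ * y / d₁)) (Real.exp (θ * x / d₁) * (θ / d₁)) x :=
    (((hasDerivAt_id x).const_mul θ).div_const d₁).exp.congr_deriv (by simp)
  refine (hexp.mul (hu.differentiable_deriv_two x).hasDerivAt).congr_deriv ?_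
  field_simp
  linear_combination hueq x

theorem eventually_lt_mul_add_mul {l : Filter ℝ} (hd₁ : 0 < d₁) (hd : d₁ ≤ d₂) (hβ : 0 ≤ β)
    (hvpos : ∀ x, 0 < v x) (h : ∀ c < m, ∀ᶠ x in l, c < α * u x + β * v x) :
    ∀ c < d₁ * m, ∀ᶠ x in l, c < α * d₁ * u x + β * d₂ * v x := by
  intro c hc
  filter_upwards [h (c / d₁) (by rwa [div_lt_iff₀' hd₁])] with x hx
  rw [div_lt_iff₀' hd₁] at hx
  linarith [min_diffusivity_mul_le (α := α) (x := u x) hd hβ (hvpos x).le]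

theorem flux_neg_of_isMin (hd₁ : 0 < d₁) (hd : d₁ ≤ d₂) (hθ : θ ≤ 0) (hα : 0 < α) (hβ : 0 < β)
    (hu : ContDiff ℝ 2 u) (hv : ContDiff ℝ 2 v) (hvpos : ∀ x, 0 < v x)
    (hueq : ∀ x, d₁ * deriv (deriv u) x + θ * deriv u x + a x = 0)
    (hveq : ∀ x, d₂ * deriv (deriv v) x + θ * deriv v x + b x = 0)
    (ha : ∀ x, α * u x + β * v x < m → 0 < a x) (hb : ∀ x, α * u x + β * v x < m → 0 < b x)
    (hbot : ∀ c < m, ∀ᶠ x in atBot, c < α * u x + β * v x) {z : ℝ}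
    (hmin : ∀ y, α * u z + β * v z ≤ α * u y + β * v y)
    (hqz : α * d₁ * u z + β * d₂ * v z < d₁ * m) :
    α * d₁ * deriv u z + β * d₂ * deriv v z < 0 := by
  have hq : Continuous fun x => α * d₁ * u x + β * d₂ * v x := by fun_prop
  obtain ⟨c, hqc, hcm⟩ := exists_between hqz
  obtain ⟨y, hcy, hyz⟩ :=
    ((eventually_lt_mul_add_mul hd₁ hd hβ.le hvpos hbot c hcm).and (eventually_le_atBot z)).exists
  obtain ⟨w, hw, hqw, hlast⟩ := exists_eq_and_forall_Ioc_lt hq hyz hcy.le hqc.le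
  have hwz : w < z := hw.2.lt_of_ne (by rintro rfl; linarith)
  have hflux_w : α * d₁ * deriv u w + β * d₂ * deriv v w ≤ 0 :=
    (hasDerivAt_mul_add_mul (hu.differentiable two_ne_zero w) (hv.differentiable two_ne_zero w)
      _ _).nonpos_of_forall_Ioc_le hwz fun x hx => (hlast x hx).le.trans hqw.ge
  have hsource : ∀ x ∈ Ioo w z, 0 < α * a x + β * b x := by
    intro x hx
    have hpx : α * u x + β * v x < m := by
      refine lt_of_mul_lt_mul_left ?_ hd₁.le
      linarith [hlast x ⟨hx.1, hx.2.le⟩,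
        min_diffusivity_mul_le (α := α) (x := u x) hd hβ.le (hvpos x).le]
    exact add_pos (mul_pos hα (ha x hpx)) (mul_pos hβ (hb x hpx))
  linarith [flux_lt_of_le hθ hu hv hueq hveq hwz hsource (hmin w)]

theorem flux_neg_of_isMin_of_lt (hd₁ : 0 < d₁) (hd : d₁ ≤ d₂) (hθ : θ ≤ 0) (hα : 0 < α)
    (hβ : 0 < β) (hu : ContDiff ℝ 2 u) (hv : ContDiff ℝ 2 v)
    (hueq : ∀ x, d₁ * deriv (deriv u) x + θ * deriv u x + a x = 0)
    (hveq : ∀ x, d₂ * deriv (deriv v) x + θ * deriv v x + b x = 0)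
    (ha : ∀ x, α * u x + β * v x < m → 0 < a x) (hb : ∀ x, α * u x + β * v x < m → 0 < b x)
    (hbot : ∀ c < m, ∀ᶠ x in atBot, c < α * u x + β * v x) {z₀ z : ℝ}
    (hmin : ∀ y, α * u z₀ + β * v z₀ ≤ α * u y + β * v y)
    (hflux₀ : α * d₁ * deriv u z₀ + β * d₂ * deriv v z₀ < 0) (hz₀z : z₀ < z)
    (hpm : ∀ x ∈ Icc z₀ z, α * u x + β * v x < m) :
    α * d₁ * deriv u z + β * d₂ * deriv v z < 0 := by
  have hp : Continuous fun x => α * u x + β * v x := by fun_prop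
  have hderiv_p : ∀ x, HasDerivAt (fun x => α * u x + β * v x)
      (α * deriv u x + β * deriv v x) x := fun x =>
    hasDerivAt_mul_add_mul (hu.differentiable two_ne_zero x) (hv.differentiable two_ne_zero x) α β
  obtain ⟨y, hy, hyz₀⟩ := ((hbot _ (hpm z ⟨hz₀z.le, le_rfl⟩)).and (eventually_le_atBot z₀)).exists
  obtain ⟨w, hw, hpw, hlast⟩ := exists_eq_and_forall_Ioc_lt hp hyz₀ hy.le (hmin z)
  have hpm' : ∀ x ∈ Ioo w z, α * u x + β * v x < m := by
    intro x hx
    rcases le_or_gt x z₀ with hxz₀ | hz₀x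
    · exact (hlast x ⟨hx.1, hxz₀⟩).trans (hpm z ⟨hz₀z.le, le_rfl⟩)
    · exact hpm x ⟨hz₀x.le, hx.2.le⟩
  have hsum₀ : α * deriv u z₀ + β * deriv v z₀ = 0 :=
    IsLocalMin.hasDerivAt_eq_zero (Eventually.of_forall hmin) (hderiv_p z₀)
  -- `u'` keeps its sign to the left of `z₀` because `exp (θ x / d₁) u'` decreases where `a > 0`.
  have hderiv_u : 0 < deriv u w := by
    have hanti := (strictAntiOn_exp_mul_deriv hd₁ hu hueq (w := w) (z := z₀) fun x hx =>
      ha x (hpm' x ⟨hx.1, hx.2.trans hz₀z⟩)).antitoneOn (left_mem_Icc.2 hw.2)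
        (right_mem_Icc.2 hw.2) hw.2
    have := mul_pos (Real.exp_pos (θ * z₀ / d₁)) (pos_of_flux_neg hd hα hsum₀ hflux₀)
    exact pos_of_mul_pos_right (this.trans_le hanti) (Real.exp_pos _).le
  have hsum_w : α * deriv u w + β * deriv v w ≤ 0 := by
    rcases hw.2.eq_or_lt with rfl | hwz₀
    · exact hsum₀.le
    · exact (hderiv_p w).nonpos_of_forall_Ioc_le hwz₀ fun x hx => (hlast x hx).le.trans hpw.ge
  have hsource : ∀ x ∈ Ioo w z, 0 < α * a x + β * b x := fun x hx =>
    add_pos (mul_pos hα (ha x (hpm' x hx))) (mul_pos hβ (hb x (hpm' x hx)))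
  linarith [flux_nonpos_of_nonneg hd₁.le hd hα.le hderiv_u.le hsum_w,
    flux_lt_of_le hθ hu hv hueq hveq (hw.2.trans_lt hz₀z) hsource hpw.ge]

theorem lower_bound_of_le_of_nonpos (hd₁ : 0 < d₁) (hd : d₁ ≤ d₂) (hθ : θ ≤ 0) (hα : 0 < α)
    (hβ : 0 < β) (hm : 0 ≤ m) (hu : ContDiff ℝ 2 u) (hv : ContDiff ℝ 2 v)
    (hupos : ∀ x, 0 < u x) (hvpos : ∀ x, 0 < v x)
    (hueq : ∀ x, d₁ * deriv (deriv u) x + θ * deriv u x + a x = 0)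
    (hveq : ∀ x, d₂ * deriv (deriv v) x + θ * deriv v x + b x = 0)
    (ha : ∀ x, α * u x + β * v x < m → 0 < a x) (hb : ∀ x, α * u x + β * v x < m → 0 < b x)
    (hbot : ∀ c < m, ∀ᶠ x in atBot, c < α * u x + β * v x)
    (htop : ∀ c < m, ∀ᶠ x in atTop, c < α * u x + β * v x) (x : ℝ) :
    m * (d₁ / d₂) ≤ α * u x + β * v x := by
  by_contra! hx
  have hd₂ : 0 < d₂ := hd₁.trans_le hd
  have hxm : α * u x + β * v x < m :=
    hx.trans_le (mul_le_of_le_one_right hm ((div_le_one hd₂).2 hd))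
  have hp : Continuous fun x => α * u x + β * v x := by fun_prop
  have hq : Continuous fun x => α * d₁ * u x + β * d₂ * v x := by fun_prop
  obtain ⟨z₀, hmin⟩ := hp.exists_forall_le' x <| by
    rw [cocompact_eq_atBot_atTop]
    exact eventually_sup.2
      ⟨(hbot _ hxm).mono fun _ => le_of_lt, (htop _ hxm).mono fun _ => le_of_lt⟩
  have hq₀ : α * d₁ * u z₀ + β * d₂ * v z₀ < d₁ * m := calc
    _ ≤ d₂ * (α * u z₀ + β * v z₀) := le_max_diffusivity_mul hd hα.le (hupos z₀).le
    _ ≤ d₂ * (α * u x + β * v x) := mul_le_mul_of_nonneg_left (hmin x) hd₂.le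
    _ < d₂ * (m * (d₁ / d₂)) := mul_lt_mul_of_pos_left hx hd₂
    _ = d₁ * m := by field_simp
  have hflux₀ := flux_neg_of_isMin hd₁ hd hθ hα hβ hu hv hvpos hueq hveq ha hb hbot hmin hq₀
  obtain ⟨c, hqc, hcm⟩ := exists_between hq₀
  obtain ⟨y, hcy, hz₀y⟩ :=
    ((eventually_lt_mul_add_mul hd₁ hd hβ.le hvpos htop c hcm).and (eventually_ge_atTop z₀)).exists
  obtain ⟨z, hz, hqz, hfirst⟩ := exists_eq_and_forall_Ico_lt hq hz₀y hcy.le hqc.le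
  have hz₀z : z₀ < z := hz.1.lt_of_ne (by rintro rfl; linarith)
  have hflux_z : 0 ≤ α * d₁ * deriv u z + β * d₂ * deriv v z :=
    (hasDerivAt_mul_add_mul (hu.differentiable two_ne_zero z) (hv.differentiable two_ne_zero z)
      _ _).nonneg_of_forall_Ico_le hz₀z fun x hx => (hfirst x hx).le.trans hqz.ge
  have hpm : ∀ x ∈ Icc z₀ z, α * u x + β * v x < m := by
    intro x hx
    have hqx : α * d₁ * u x + β * d₂ * v x ≤ c := by
      rcases hx.2.eq_or_lt with rfl | hxz
      · exact hqz.le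
      · exact (hfirst x ⟨hx.1, hxz⟩).le
    refine lt_of_mul_lt_mul_left ?_ hd₁.le
    linarith [min_diffusivity_mul_le (α := α) (x := u x) hd hβ.le (hvpos x).le]
  linarith [flux_neg_of_isMin_of_lt hd₁ hd hθ hα hβ hu hv hueq hveq ha hb hbot hmin hflux₀ hz₀z hpm]

theorem lower_bound_of_nonpos (hd₁ : 0 < d₁) (hd₂ : 0 < d₂) (hθ : θ ≤ 0) (hα : 0 < α)
    (hβ : 0 < β) (hm : 0 ≤ m) (hu : ContDiff ℝ 2 u) (hv : ContDiff ℝ 2 v)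
    (hupos : ∀ x, 0 < u x) (hvpos : ∀ x, 0 < v x)
    (hueq : ∀ x, d₁ * deriv (deriv u) x + θ * deriv u x + a x = 0)
    (hveq : ∀ x, d₂ * deriv (deriv v) x + θ * deriv v x + b x = 0)
    (ha : ∀ x, α * u x + β * v x < m → 0 < a x) (hb : ∀ x, α * u x + β * v x < m → 0 < b x)
    (hbot : ∀ c < m, ∀ᶠ x in atBot, c < α * u x + β * v x)
    (htop : ∀ c < m, ∀ᶠ x in atTop, c < α * u x + β * v x) (x : ℝ) :
    m * (min d₁ d₂ / max d₁ d₂) ≤ α * u x + β * v x := by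
  rcases le_total d₁ d₂ with hd | hd
  · rw [min_eq_left hd, max_eq_right hd]
    exact lower_bound_of_le_of_nonpos hd₁ hd hθ hα hβ hm hu hv hupos hvpos hueq hveq ha hb
      hbot htop x
  · simp only [min_eq_right hd, max_eq_left hd, add_comm (α * u _)] at hbot htop ha hb ⊢
    exact lower_bound_of_le_of_nonpos hd₂ hd hθ hβ hα hm hv hu hvpos hupos hveq hueq hb ha
      hbot htop x

theorem lower_bound (hd₁ : 0 < d₁) (hd₂ : 0 < d₂) (hα : 0 < α) (hβ : 0 < β) (hm : 0 ≤ m)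
    (hu : ContDiff ℝ 2 u) (hv : ContDiff ℝ 2 v) (hupos : ∀ x, 0 < u x) (hvpos : ∀ x, 0 < v x)
    (hueq : ∀ x, d₁ * deriv (deriv u) x + θ * deriv u x + a x = 0)
    (hveq : ∀ x, d₂ * deriv (deriv v) x + θ * deriv v x + b x = 0)
    (ha : ∀ x, α * u x + β * v x < m → 0 < a x) (hb : ∀ x, α * u x + β * v x < m → 0 < b x)
    (hbot : ∀ c < m, ∀ᶠ x in atBot, c < α * u x + β * v x)
    (htop : ∀ c < m, ∀ᶠ x in atTop, c < α * u x + β * v x) (x : ℝ) :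
    m * (min d₁ d₂ / max d₁ d₂) ≤ α * u x + β * v x := by
  rcases le_total θ 0 with hθ | hθ
  · exact lower_bound_of_nonpos hd₁ hd₂ hθ hα hβ hm hu hv hupos hvpos hueq hveq ha hb hbot htop x
  have hreflect : ∀ {d : ℝ} {w c : ℝ → ℝ},
      (∀ x, d * deriv (deriv w) x + θ * deriv w x + c x = 0) →
      ∀ x, d * deriv (deriv fun y => w (-y)) x + -θ * deriv (fun y => w (-y)) x + c (-x) = 0 := by
    intro d w c hw x
    rw [deriv_deriv_comp_neg, deriv_comp_neg]
    linarith [hw (-x)]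
  simpa using lower_bound_of_nonpos (u := fun y => u (-y)) (v := fun y => v (-y)) hd₁ hd₂
    (neg_nonpos.2 hθ) hα hβ hm (hu.comp contDiff_neg) (hv.comp contDiff_neg)
    (fun y => hupos (-y)) (fun y => hvpos (-y)) (hreflect hueq) (hreflect hveq)
    (fun y => ha (-y)) (fun y => hb (-y))
    (fun c hc => tendsto_neg_atBot_atTop.eventually (htop c hc))
    (fun c hc => tendsto_neg_atTop_atBot.eventually (hbot c hc)) (-x)

end TravelingWave

theorem min_mul_le_of_one_le_div_add_div {α β X Y ulow vlow : ℝ} (hα : 0 ≤ α) (hβ : 0 ≤ β)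
    (hulow : 0 < ulow) (hvlow : 0 < vlow) (hX : 0 ≤ X) (hY : 0 ≤ Y)
    (hline : 1 ≤ X / ulow + Y / vlow) :
    min (α * ulow) (β * vlow) ≤ α * X + β * Y := calc
  _ ≤ min (α * ulow) (β * vlow) * (X / ulow + Y / vlow) :=
    le_mul_of_one_le_right (le_min (by positivity) (by positivity)) hline
  _ ≤ α * ulow * (X / ulow) + β * vlow * (Y / vlow) := by
    rw [mul_add]
    gcongr
    exacts [min_le_left _ _, min_le_right _ _]
  _ = α * X + β * Y := by field_simp

theorem pos_of_lt_of_zero_le {F : ℝ → ℝ → ℝ} {α β m : ℝ} (hα : 0 ≤ α) (hβ : 0 ≤ β)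
    (hF : ContinuousOn (fun p : ℝ × ℝ => F p.1 p.2) {p | 0 ≤ p.1 ∧ 0 ≤ p.2})
    (hzero : ∀ A B, 0 ≤ A → 0 ≤ B → F A B = 0 → m ≤ α * A + β * B)
    (hsmall : ∃ δ > 0, ∀ A B, 0 < A → A < δ → 0 < B → B < δ → 0 < F A B)
    (A B : ℝ) (hA : 0 < A) (hB : 0 < B) (hAB : α * A + β * B < m) : 0 < F A B := by
  obtain ⟨δ, hδ, hsmall⟩ := hsmall
  set T : Set (ℝ × ℝ) := {p | 0 < p.1 ∧ 0 < p.2 ∧ α * p.1 + β * p.2 < m}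
  have hT : Convex ℝ T :=
    (convex_halfSpace_gt (LinearMap.fst ℝ ℝ ℝ).isLinear 0).inter
      ((convex_halfSpace_gt (LinearMap.snd ℝ ℝ ℝ).isLinear 0).inter
        (convex_halfSpace_lt (α • LinearMap.fst ℝ ℝ ℝ + β • LinearMap.snd ℝ ℝ ℝ).isLinear m))
  have hm : 0 < m := lt_of_le_of_lt (by positivity) hAB
  have hdiag : Tendsto (fun s : ℝ => α * s + β * s) (𝓝 0) (𝓝 0) := by
    simpa using (Continuous.tendsto (f := fun s : ℝ => α * s + β * s) (by fun_prop) 0)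
  obtain ⟨s, ⟨hsδ, hsm⟩, hs⟩ := (((eventually_lt_nhds hδ).and
    (hdiag.eventually (eventually_lt_nhds hm))).filter_mono nhdsWithin_le_nhds |>.and
      (self_mem_nhdsWithin (s := Ioi 0))).exists
  by_contra! hFAB
  obtain ⟨P, hPT, hP⟩ := hT.isPreconnected.intermediate_value (a := (A, B)) (b := (s, s))
    ⟨hA, hB, hAB⟩ ⟨hs, hs, hsm⟩ (hF.mono fun P hP => ⟨hP.1.le, hP.2.1.le⟩)
    ⟨hFAB, (hsmall s s hs hsδ hs hsδ).le⟩
  exact hPT.2.2.not_ge (hzero P.1 P.2 hPT.1.le hPT.2.1.le hP)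

theorem mem_of_equilibrium {R : Set (ℝ × ℝ)} {f g : ℝ → ℝ → ℝ}
    (hCf : {p : ℝ × ℝ | 0 ≤ p.1 ∧ 0 ≤ p.2 ∧ f p.1 p.2 = 0} ⊆ R)
    (hCg : {p : ℝ × ℝ | 0 ≤ p.1 ∧ 0 ≤ p.2 ∧ g p.1 p.2 = 0} ⊆ R) {e : ℝ × ℝ}
    (he : (∃ u₁ : ℝ, 0 < u₁ ∧ f u₁ 0 = 0 ∧ e = (u₁, 0)) ∨
      (∃ v₂ : ℝ, 0 < v₂ ∧ g 0 v₂ = 0 ∧ e = (0, v₂)) ∨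
      (∃ us vs : ℝ, 0 < us ∧ 0 < vs ∧ f us vs = 0 ∧ g us vs = 0 ∧ e = (us, vs))) :
    e ∈ R := by
  rcases he with ⟨u₁, hu₁, hf, rfl⟩ | ⟨v₂, hv₂, hg, rfl⟩ | ⟨us, vs, hus, hvs, hf, -, rfl⟩
  · exact hCf ⟨hu₁.le, le_rfl, hf⟩
  · exact hCg ⟨le_rfl, hv₂.le, hg⟩
  · exact hCf ⟨hus.le, hvs.le, hf⟩

theorem eventually_lt_of_tendsto {u v : ℝ → ℝ} {l : Filter ℝ} {e : ℝ × ℝ} {α β m : ℝ}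
    (h : Tendsto (fun x => (u x, v x)) l (𝓝 e)) (he : m ≤ α * e.1 + β * e.2) :
    ∀ c < m, ∀ᶠ x in l, c < α * u x + β * v x := fun c hc =>
  ((Continuous.tendsto (f := fun p : ℝ × ℝ => α * p.1 + β * p.2) (by fun_prop) e).comp h).eventually
    (eventually_gt_nhds (hc.trans_le he))

theorem NBMP_two_equations_lower_bound_general
    (d₁ d₂ θ : ℝ) (hd₁ : 0 < d₁) (hd₂ : 0 < d₂)
    (ubar ulow vbar vlow : ℝ)
    (hulow : 0 < ulow)
    (hvlow : 0 < vlow)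
    (R : Set (ℝ × ℝ))
    (hR : R = {p : ℝ × ℝ | 0 ≤ p.1 ∧ 0 ≤ p.2 ∧
      1 ≤ p.1 / ulow + p.2 / vlow ∧ p.1 / ubar + p.2 / vbar ≤ 1})
    (f g : ℝ → ℝ → ℝ)
    (hfc : ContinuousOn (fun p : ℝ × ℝ => f p.1 p.2) {p | 0 ≤ p.1 ∧ 0 ≤ p.2})
    (hgc : ContinuousOn (fun p : ℝ × ℝ => g p.1 p.2) {p | 0 ≤ p.1 ∧ 0 ≤ p.2})
    (hCf : {p : ℝ × ℝ | 0 ≤ p.1 ∧ 0 ≤ p.2 ∧ f p.1 p.2 = 0} ⊆ R)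
    (hCg : {p : ℝ × ℝ | 0 ≤ p.1 ∧ 0 ≤ p.2 ∧ g p.1 p.2 = 0} ⊆ R)
    (hsmall : ∃ δ > 0, ∀ u v : ℝ, 0 < u → u < δ → 0 < v → v < δ →
      0 < f u v ∧ 0 < g u v)
    (u v : ℝ → ℝ)
    (hu : ContDiff ℝ 2 u) (hv : ContDiff ℝ 2 v)
    (hupos : ∀ x, 0 < u x) (hvpos : ∀ x, 0 < v x)
    (hueq : ∀ x, d₁ * deriv (deriv u) x + θ * deriv u x + u x * f (u x) (v x) = 0)
    (hveq : ∀ x, d₂ * deriv (deriv v) x + θ * deriv v x + v x * g (u x) (v x) = 0)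
    (eminus eplus : ℝ × ℝ)
    (hlimminus : Tendsto (fun x => (u x, v x)) atBot (nhds eminus))
    (hlimplus : Tendsto (fun x => (u x, v x)) atTop (nhds eplus))
    (heminus : (∃ u₁ : ℝ, 0 < u₁ ∧ f u₁ 0 = 0 ∧ eminus = (u₁, 0)) ∨
      (∃ v₂ : ℝ, 0 < v₂ ∧ g 0 v₂ = 0 ∧ eminus = (0, v₂)) ∨
      (∃ us vs : ℝ, 0 < us ∧ 0 < vs ∧ f us vs = 0 ∧ g us vs = 0 ∧ eminus = (us, vs)))
    (heplus : (∃ u₁ : ℝ, 0 < u₁ ∧ f u₁ 0 = 0 ∧ eplus = (u₁, 0)) ∨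
      (∃ v₂ : ℝ, 0 < v₂ ∧ g 0 v₂ = 0 ∧ eplus = (0, v₂)) ∨
      (∃ us vs : ℝ, 0 < us ∧ 0 < vs ∧ f us vs = 0 ∧ g us vs = 0 ∧ eplus = (us, vs)))
    (α β : ℝ) (hα : 0 < α) (hβ : 0 < β) (x : ℝ) :
    min (α * ulow) (β * vlow) * (min d₁ d₂ / max d₁ d₂) ≤ α * u x + β * v x := by
  set m := min (α * ulow) (β * vlow)
  have hR_le : ∀ P ∈ R, m ≤ α * P.1 + β * P.2 := by
    rw [hR]
    exact fun P ⟨hP₁, hP₂, hline, _⟩ =>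
      min_mul_le_of_one_le_div_add_div hα.le hβ.le hulow hvlow hP₁ hP₂ hline
  have hf_pos := pos_of_lt_of_zero_le hα.le hβ.le hfc
    (fun A B hA hB hf => hR_le (A, B) (hCf ⟨hA, hB, hf⟩))
    (hsmall.imp fun _ ⟨hδ, h⟩ => ⟨hδ, fun A B h₁ h₂ h₃ h₄ => (h A B h₁ h₂ h₃ h₄).1⟩)
  have hg_pos := pos_of_lt_of_zero_le hα.le hβ.le hgc
    (fun A B hA hB hg => hR_le (A, B) (hCg ⟨hA, hB, hg⟩))
    (hsmall.imp fun _ ⟨hδ, h⟩ => ⟨hδ, fun A B h₁ h₂ h₃ h₄ => (h A B h₁ h₂ h₃ h₄).2⟩)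
  exact TravelingWave.lower_bound hd₁ hd₂ hα hβ (by positivity) hu hv hupos hvpos hueq hveq
    (fun y hy => mul_pos (hupos y) (hf_pos _ _ (hupos y) (hvpos y) hy))
    (fun y hy => mul_pos (hvpos y) (hg_pos _ _ (hupos y) (hvpos y) hy))
    (eventually_lt_of_tendsto hlimminus (hR_le _ (mem_of_equilibrium hCf hCg heminus)))
    (eventually_lt_of_tendsto hlimplus (hR_le _ (mem_of_equilibrium hCf hCg heplus))) x

/-- N-barrier maximum principle for two equations, lower bound. -/
theorem NBMP_two_equations_lower_bound
    (d₁ d₂ θ : ℝ) (hd₁ : 0 < d₁) (hd₂ : 0 < d₂)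
    (ubar ulow vbar vlow : ℝ)
    (hulow : 0 < ulow) (huu : ulow < ubar)
    (hvlow : 0 < vlow) (hvv : vlow < vbar)
    (R : Set (ℝ × ℝ))
    (hR : R = {p : ℝ × ℝ | 0 ≤ p.1 ∧ 0 ≤ p.2 ∧
      1 ≤ p.1 / ulow + p.2 / vlow ∧ p.1 / ubar + p.2 / vbar ≤ 1})
    (f g : ℝ → ℝ → ℝ)
    (hfc : ContinuousOn (fun p : ℝ × ℝ => f p.1 p.2) {p | 0 ≤ p.1 ∧ 0 ≤ p.2})
    (hgc : ContinuousOn (fun p : ℝ × ℝ => g p.1 p.2) {p | 0 ≤ p.1 ∧ 0 ≤ p.2})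
    (hCf : {p : ℝ × ℝ | 0 ≤ p.1 ∧ 0 ≤ p.2 ∧ f p.1 p.2 = 0} ⊆ R)
    (hCg : {p : ℝ × ℝ | 0 ≤ p.1 ∧ 0 ≤ p.2 ∧ g p.1 p.2 = 0} ⊆ R)
    (hsmall : ∃ δ > 0, ∀ u v : ℝ, 0 < u → u < δ → 0 < v → v < δ →
      0 < f u v ∧ 0 < g u v)
    (hlarge : ∃ M > 0, ∀ u v : ℝ, M < u → M < v →
      f u v < 0 ∧ g u v < 0)
    (u v : ℝ → ℝ)
    (hu : ContDiff ℝ 2 u) (hv : ContDiff ℝ 2 v)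
    (hupos : ∀ x, 0 < u x) (hvpos : ∀ x, 0 < v x)
    (hueq : ∀ x, d₁ * deriv (deriv u) x + θ * deriv u x + u x * f (u x) (v x) = 0)
    (hveq : ∀ x, d₂ * deriv (deriv v) x + θ * deriv v x + v x * g (u x) (v x) = 0)
    (eminus eplus : ℝ × ℝ)
    (hlimminus : Tendsto (fun x => (u x, v x)) atBot (nhds eminus))
    (hlimplus : Tendsto (fun x => (u x, v x)) atTop (nhds eplus))
    (heminus : (∃ u₁ : ℝ, 0 < u₁ ∧ f u₁ 0 = 0 ∧ eminus = (u₁, 0)) ∨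
      (∃ v₂ : ℝ, 0 < v₂ ∧ g 0 v₂ = 0 ∧ eminus = (0, v₂)) ∨
      (∃ us vs : ℝ, 0 < us ∧ 0 < vs ∧ f us vs = 0 ∧ g us vs = 0 ∧ eminus = (us, vs)))
    (heplus : (∃ u₁ : ℝ, 0 < u₁ ∧ f u₁ 0 = 0 ∧ eplus = (u₁, 0)) ∨
      (∃ v₂ : ℝ, 0 < v₂ ∧ g 0 v₂ = 0 ∧ eplus = (0, v₂)) ∨
      (∃ us vs : ℝ, 0 < us ∧ 0 < vs ∧ f us vs = 0 ∧ g us vs = 0 ∧ eplus = (us, vs)))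
    (α β : ℝ) (hα : 0 < α) (hβ : 0 < β) (x : ℝ) :
    min (α * ulow) (β * vlow) * (min d₁ d₂ / max d₁ d₂) ≤ α * u x + β * v x :=
  NBMP_two_equations_lower_bound_general d₁ d₂ θ hd₁ hd₂ ubar ulow vbar vlow hulow hvlow R hR f g
    hfc hgc hCf hCg hsmall u v hu hv hupos hvpos hueq hveq eminus eplus hlimminus hlimplus heminus
    heplus α β hα hβ x
end

section
/- Let ū > u̲ > 0, v̄ > v̲ > 0, w̄ > w̲ > 0, and let PH = {(u,v,w) ∈ ℝ³ : u,v,w ≥ 0, u/u̲ + v/v̲ + w/w̲ ≥ 1, u/ū + v/v̄ + w/w̄ ≤ 1} be the pentahedron enclosed by the three coordinate planes and the planes u/ū + v/v̄ + w/w̄ = 1 and u/u̲ + v/v̲ + w/w̲ = 1. Let f, g, h be continuous real-valued functions on the closed first octant [0,∞)³ such that: (i) the zero sets S_f = {f = 0}, S_g = {g = 0}, S_h = {h = 0} in the closed first octant are contained in PH; (ii) there exists δ > 0 such that f, g, h > 0 at every (u,v,w) with 0 < u,v,w < δ; and (iii) there exists M > 0 such that f, g, h < 0 at every (u,v,w)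 with u,v,w > M. Then for any constants α, β, γ > 0, defining G(u,v,w) = α·u·f(u,v,w) + β·v·g(u,v,w) + γ·w·h(u,v,w), every point (u,v,w) with u,v,w ≥ 0, (u,v,w) ≠ (0,0,0), and G(u,v,w) = 0 lies in PH. -/
/-!
Below the plane `u/u̲ + v/v̲ + w/w̲ = 1` the closed first octant is a convex set disjoint from `PH`,
so none of `f, g, h` vanishes there; since they are all positive near the origin, connectedness
makes them positive on the whole region, and `G > 0` there except at the origin. Symmetrically,
above the plane `u/ū + v/v̄ + w/w̄ = 1` they are all negative, because they are negative far out
on the diagonal, and `G < 0`. Hence `G` can only vanish in `PH`.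
-/

open Set Filter Topology

theorem IsPreconnected.pos_of_forall_ne_zero_s3 {X : Type*} [TopologicalSpace X] {S : Set X}
    (hS : IsPreconnected S) {F : X → ℝ} (hF : ContinuousOn F S) (hF0 : ∀ x ∈ S, F x ≠ 0)
    {a b : X} (ha : a ∈ S) (hFa : 0 < F a) (hb : b ∈ S) : 0 < F b := by
  by_contra! hFb
  obtain ⟨x, hx, hFx⟩ := hS.intermediate_value hb ha hF ⟨hFb, hFa.le⟩
  exact hF0 x hx hFx

def octant : Set (ℝ × ℝ × ℝ) := {p | 0 ≤ p.1 ∧ 0 ≤ p.2.1 ∧ 0 ≤ p.2.2}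

theorem convex_octant : Convex ℝ octant := by
  have hIci : octant = Ici 0 := by
    ext p
    simp [octant, Prod.le_def]
  exact hIci ▸ convex_Ici 0

/-- The plane with intercepts `a, b, c` is the level set `interceptSum a b c = 1`. -/
noncomputable def interceptSum (a b c : ℝ) (p : ℝ × ℝ × ℝ) : ℝ := p.1 / a + p.2.1 / b + p.2.2 / c

theorem isLinearMap_interceptSum (a b c : ℝ) : IsLinearMap ℝ (interceptSum a b c) where
  map_add p q := by simp only [interceptSum, Prod.fst_add, Prod.snd_add]; ring
  map_smul r p := by simp only [interceptSum, Prod.smul_fst, Prod.smul_snd, smul_eq_mul]; ring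

theorem exists_diag_interceptSum_lt_one (a b c : ℝ) {δ : ℝ} (hδ : 0 < δ) :
    ∃ ε, 0 < ε ∧ ε < δ ∧ interceptSum a b c (ε, ε, ε) < 1 := by
  have hcont : Continuous fun ε : ℝ => interceptSum a b c (ε, ε, ε) := by
    unfold interceptSum; fun_prop
  have hlim : Tendsto (fun ε : ℝ => interceptSum a b c (ε, ε, ε)) (𝓝[>] 0) (𝓝 0) := by
    simpa [interceptSum] using (hcont.tendsto 0).mono_left nhdsWithin_le_nhds
  obtain ⟨ε, hε1, hεδ⟩ :=
    ((hlim.eventually (gt_mem_nhds one_pos)).and (Ioo_mem_nhdsGT hδ)).exists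
  exact ⟨ε, hεδ.1, hεδ.2, hε1⟩

theorem exists_diag_one_lt_interceptSum {a b c : ℝ} (ha : 0 < a) (hb : 0 ≤ b) (hc : 0 ≤ c)
    (M : ℝ) : ∃ T, M < T ∧ 1 < interceptSum a b c (T, T, T) := by
  set T := max M a + 1
  have hMT : M < T := by grind
  have haT : 1 < T / a := (one_lt_div ha).2 (by grind)
  have hT : 0 ≤ T := by grind
  have hbT : 0 ≤ T / b := by positivity
  have hcT : 0 ≤ T / c := by positivity
  exact ⟨T, hMT, by unfold interceptSum; linarith⟩

def pentahedron (ulow vlow wlow ubar vbar wbar : ℝ) : Set (ℝ × ℝ × ℝ) :=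
  {p | 0 ≤ p.1 ∧ 0 ≤ p.2.1 ∧ 0 ≤ p.2.2 ∧
    1 ≤ interceptSum ulow vlow wlow p ∧ interceptSum ubar vbar wbar p ≤ 1}

section Pentahedron

variable {ulow vlow wlow ubar vbar wbar : ℝ} {φ : ℝ × ℝ × ℝ → ℝ} {p q : ℝ × ℝ × ℝ}

theorem lt_or_lt_of_notMem_pentahedron (hp : p ∈ octant)
    (hpPH : p ∉ pentahedron ulow vlow wlow ubar vbar wbar) :
    interceptSum ulow vlow wlow p < 1 ∨ 1 < interceptSum ubar vbar wbar p := by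
  by_contra! h
  exact hpPH ⟨hp.1, hp.2.1, hp.2.2, h⟩

theorem pos_of_interceptSum_lt_one (hφ : ContinuousOn φ octant)
    (hzero : {p : ℝ × ℝ × ℝ | 0 ≤ p.1 ∧ 0 ≤ p.2.1 ∧ 0 ≤ p.2.2 ∧ φ p = 0} ⊆
      pentahedron ulow vlow wlow ubar vbar wbar)
    (hq : q ∈ octant) (hq1 : interceptSum ulow vlow wlow q < 1) (hφq : 0 < φ q)
    (hp : p ∈ octant) (hp1 : interceptSum ulow vlow wlow p < 1) : 0 < φ p := by
  have hconv :=
    convex_octant.inter (convex_halfSpace_lt (isLinearMap_interceptSum ulow vlow wlow) 1)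
  refine hconv.isPreconnected.pos_of_forall_ne_zero_s3 (hφ.mono inter_subset_left) ?_
    ⟨hq, hq1⟩ hφq ⟨hp, hp1⟩
  rintro x ⟨hx, hx1⟩ hφx
  exact (hzero ⟨hx.1, hx.2.1, hx.2.2, hφx⟩).2.2.2.1.not_gt hx1

theorem neg_of_one_lt_interceptSum (hφ : ContinuousOn φ octant)
    (hzero : {p : ℝ × ℝ × ℝ | 0 ≤ p.1 ∧ 0 ≤ p.2.1 ∧ 0 ≤ p.2.2 ∧ φ p = 0} ⊆
      pentahedron ulow vlow wlow ubar vbar wbar)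
    (hq : q ∈ octant) (hq1 : 1 < interceptSum ubar vbar wbar q) (hφq : φ q < 0)
    (hp : p ∈ octant) (hp1 : 1 < interceptSum ubar vbar wbar p) : φ p < 0 := by
  have hconv :=
    convex_octant.inter (convex_halfSpace_gt (isLinearMap_interceptSum ubar vbar wbar) 1)
  refine neg_pos.1 <| hconv.isPreconnected.pos_of_forall_ne_zero_s3 (hφ.mono inter_subset_left).neg
    ?_ ⟨hq, hq1⟩ (neg_pos.2 hφq) ⟨hp, hp1⟩
  rintro x ⟨hx, hx1⟩ hφx
  exact (hzero ⟨hx.1, hx.2.1, hx.2.2, neg_eq_zero.1 hφx⟩).2.2.2.2.not_gt hx1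

end Pentahedron

theorem mul_add_mul_add_mul_pos {α β γ u v w x y z : ℝ} (hα : 0 < α) (hβ : 0 < β) (hγ : 0 < γ)
    (hu : 0 ≤ u) (hv : 0 ≤ v) (hw : 0 ≤ w) (huvw : (u, v, w) ≠ (0, 0, 0))
    (hx : 0 < x) (hy : 0 < y) (hz : 0 < z) : 0 < α * u * x + β * v * y + γ * w * z := by
  have hαux : 0 ≤ α * u * x := by positivity
  have hβvy : 0 ≤ β * v * y := by positivity
  have hγwz : 0 ≤ γ * w * z := by positivity
  rcases hu.lt_or_eq with hu | rfl
  · have : 0 < α * u * x := by positivity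
    linarith
  rcases hv.lt_or_eq with hv | rfl
  · have : 0 < β * v * y := by positivity
    linarith
  rcases hw.lt_or_eq with hw | rfl
  · have : 0 < γ * w * z := by positivity
    linarith
  exact absurd rfl huvw

/-- The zero set of `G(u,v,w) = α u f + β v g + γ w h` in the closed
first octant lies (apart from the origin) within the pentahedron `PH` enclosed by the
coordinate planes and the planes `u/ū + v/v̄ + w/w̄ = 1` and `u/u̲ + v/v̲ + w/w̲ = 1`. -/
theorem zero_set_of_G_in_PH
    (ubar ulow vbar vlow wbar wlow : ℝ)
    (hulow : 0 < ulow) (huu : ulow < ubar)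
    (hvlow : 0 < vlow) (hvv : vlow < vbar)
    (hwlow : 0 < wlow) (hww : wlow < wbar)
    (PH : Set (ℝ × ℝ × ℝ))
    (hPH : PH = {p : ℝ × ℝ × ℝ | 0 ≤ p.1 ∧ 0 ≤ p.2.1 ∧ 0 ≤ p.2.2 ∧
      1 ≤ p.1 / ulow + p.2.1 / vlow + p.2.2 / wlow ∧
      p.1 / ubar + p.2.1 / vbar + p.2.2 / wbar ≤ 1})
    (f g h : ℝ → ℝ → ℝ → ℝ)
    (hfc : ContinuousOn (fun p : ℝ × ℝ × ℝ => f p.1 p.2.1 p.2.2)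
      {p | 0 ≤ p.1 ∧ 0 ≤ p.2.1 ∧ 0 ≤ p.2.2})
    (hgc : ContinuousOn (fun p : ℝ × ℝ × ℝ => g p.1 p.2.1 p.2.2)
      {p | 0 ≤ p.1 ∧ 0 ≤ p.2.1 ∧ 0 ≤ p.2.2})
    (hhc : ContinuousOn (fun p : ℝ × ℝ × ℝ => h p.1 p.2.1 p.2.2)
      {p | 0 ≤ p.1 ∧ 0 ≤ p.2.1 ∧ 0 ≤ p.2.2})
    (hSf : {p : ℝ × ℝ × ℝ | 0 ≤ p.1 ∧ 0 ≤ p.2.1 ∧ 0 ≤ p.2.2 ∧ f p.1 p.2.1 p.2.2 = 0} ⊆ PH)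
    (hSg : {p : ℝ × ℝ × ℝ | 0 ≤ p.1 ∧ 0 ≤ p.2.1 ∧ 0 ≤ p.2.2 ∧ g p.1 p.2.1 p.2.2 = 0} ⊆ PH)
    (hSh : {p : ℝ × ℝ × ℝ | 0 ≤ p.1 ∧ 0 ≤ p.2.1 ∧ 0 ≤ p.2.2 ∧ h p.1 p.2.1 p.2.2 = 0} ⊆ PH)
    (hsmall : ∃ δ > 0, ∀ u v w : ℝ, 0 < u → u < δ → 0 < v → v < δ → 0 < w → w < δ →
      0 < f u v w ∧ 0 < g u v w ∧ 0 < h u v w)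
    (hlarge : ∃ M > 0, ∀ u v w : ℝ, M < u → M < v → M < w →
      f u v w < 0 ∧ g u v w < 0 ∧ h u v w < 0)
    (α β γ : ℝ) (hα : 0 < α) (hβ : 0 < β) (hγ : 0 < γ)
    (u v w : ℝ) (hu0 : 0 ≤ u) (hv0 : 0 ≤ v) (hw0 : 0 ≤ w)
    (hne : (u, v, w) ≠ (0, 0, 0))
    (hG : α * u * f u v w + β * v * g u v w + γ * w * h u v w = 0) :
    (u, v, w) ∈ PH := by
  subst hPH
  have hp : (u, v, w) ∈ octant := ⟨hu0, hv0, hw0⟩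
  by_contra hpPH
  rcases lt_or_lt_of_notMem_pentahedron hp hpPH with hbelow | habove
  · obtain ⟨δ, hδ, hsmall⟩ := hsmall
    obtain ⟨ε, hε, hεδ, hε1⟩ := exists_diag_interceptSum_lt_one ulow vlow wlow hδ
    have hq : (ε, ε, ε) ∈ octant := ⟨hε.le, hε.le, hε.le⟩
    obtain ⟨hfq, hgq, hhq⟩ := hsmall ε ε ε hε hεδ hε hεδ hε hεδ
    have hf := pos_of_interceptSum_lt_one hfc hSf hq hε1 hfq hp hbelow
    have hg := pos_of_interceptSum_lt_one hgc hSg hq hε1 hgq hp hbelow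
    have hh := pos_of_interceptSum_lt_one hhc hSh hq hε1 hhq hp hbelow
    exact (mul_add_mul_add_mul_pos hα hβ hγ hu0 hv0 hw0 hne hf hg hh).ne' hG
  · obtain ⟨M, hM, hlarge⟩ := hlarge
    obtain ⟨T, hMT, hT1⟩ := exists_diag_one_lt_interceptSum (hulow.trans huu)
      (hvlow.trans hvv).le (hwlow.trans hww).le M
    have hT : 0 ≤ T := (hM.trans hMT).le
    have hq : (T, T, T) ∈ octant := ⟨hT, hT, hT⟩
    obtain ⟨hfq, hgq, hhq⟩ := hlarge T T T hMT hMT hMT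
    have hf := neg_of_one_lt_interceptSum hfc hSf hq hT1 hfq hp habove
    have hg := neg_of_one_lt_interceptSum hgc hSg hq hT1 hgq hp habove
    have hh := neg_of_one_lt_interceptSum hhc hSh hq hT1 hhq hp habove
    have hpos := mul_add_mul_add_mul_pos hα hβ hγ hu0 hv0 hw0 hne
      (neg_pos.2 hf) (neg_pos.2 hg) (neg_pos.2 hh)
    linarith
end

section
/- (N-barrier maximum principle for systems of three equations: lower bound.) Let d₁, d₂, d₃ > 0 and θ ∈ ℝ. Let ū > u̲ > 0, v̄ > v̲ > 0, w̄ > w̲ > 0, and let PH = {(u,v,w) ∈ ℝ³ : u,v,w ≥ 0, u/u̲ + v/v̲ + w/w̲ ≥ 1, u/ū + v/v̄ + w/w̄ ≤ 1}. Let f, g, h be continuous real-valued functions on [0,∞)³ satisfying: (i) the zero sets {f = 0}, {g = 0}, {h = 0} in the closed first octant are contained in PH; (ii) there exists δ > 0 such that f, g, h > 0 at every (u,v,w) with 0 < u,v,w < δ; (iii) there exists M > 0 such that f, g, h < 0 at every (u,v,w) with u,v,w > M. Suppose u, v, w : ℝ → ℝ are twice continuously differentiable functions, positive on ℝ, satisfying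 d₁u'' + θu' + u f(u,v,w) = 0, d₂v'' + θv' + v g(u,v,w) = 0, and d₃w'' + θw' + w h(u,v,w) = 0 on ℝ, and such that (u(x),v(x),w(x)) converges as x → −∞ to a point e₋ and as x → +∞ to a point e₊, where each of e₋ and e₊ is one of: a point (u₁,0,0) with u₁ > 0 and f(u₁,0,0) = 0; a point (0,v₂,0) with v₂ > 0 and g(0,v₂,0) = 0; a point (0,0,w₃) with w₃ > 0 and h(0,0,w₃) = 0; or a point (u*,v*,w*) with u*,v*,w* > 0 and f(u*,v*,w*) = g(u*,v*,w*) = h(u*,v*,w*) = 0 (in particular, neither e₋ nor e₊ is the extinction state (0,0,0)). Then for every α, β, γ > 0 and every x ∈ ℝ, α·u(x) + β·v(x) + γ·w(x) ≥ min(α·u̲, β·v̲, γ·w̲) · min(d₁,d₂,d₃)/max(d₁,d₂,d₃). -/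
open Filter Set Topology

/-!
Put `P = αu + βv + γw` and `Q = αu/d₁ + βv/d₂ + γw/d₃`, so that `d_min Q ≤ P ≤ d_max Q`.
Adding the three equations with weights `α/d₁, β/d₂, γ/d₃` shows that the flux
`F = P' + θQ` satisfies `F' = -(α/d₁ u f + β/d₂ v g + γ/d₃ w h)`.

The zero sets of `f, g, h` lie on or above the plane `u/u̲ + v/v̲ + w/w̲ = 1` and `f, g, h` are
positive near the origin, so by connectedness they are positive on the convex region strictly
below that plane. If `P < λ := min(αu̲, βv̲, γw̲)` then `(u, v, w)` lies in this region, so `F` is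
strictly decreasing wherever `P < λ`. The boundary states lie in `PH`, so the limits of `P` at
`±∞` are at least `λ`.

Let `z` be a global minimum of `P`. If `d_max Q(z) < λ`, pick a level `μ` strictly between them
and let `a < z` be the last point before `z` with `P(a) ≥ μ` (for `θ ≤ 0`; for `θ ≥ 0` take the
first point after `z`). Then `P'(a) ≤ 0 = P'(z)` and `Q(a) ≥ μ/d_max > Q(z)`, so `F(a) ≤ F(z)`,
contradicting the strict decrease of `F` on `[a, z]`. Hence `λ ≤ d_max Q(z) ≤ (d_max/d_min) P(z)`.
-/

theorem deriv_nonpos_of_isMaxOn_Icc {f : ℝ → ℝ} {a b : ℝ} (hab : a < b)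
    (hf : DifferentiableAt ℝ f a) (hmax : IsMaxOn f (Icc a b) a) : deriv f a ≤ 0 := by
  have hcone : b - a ∈ posTangentConeAt (Icc a b) a :=
    sub_mem_posTangentConeAt_of_segment_subset (segment_eq_Icc hab.le ▸ Subset.rfl)
  have := hmax.localize.hasFDerivWithinAt_nonpos
    hf.hasDerivAt.hasDerivWithinAt.hasFDerivWithinAt hcone
  simp only [ContinuousLinearMap.toSpanSingleton_apply, smul_eq_mul] at this
  exact nonpos_of_mul_nonpos_right this (sub_pos.2 hab)

namespace NBarrier

variable {P Q F : ℝ → ℝ} {θ lam D L : ℝ}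

theorem le_of_tendsto_atBot (hP : Differentiable ℝ P) (hF : Differentiable ℝ F)
    (hFeq : ∀ s, F s = deriv P s + θ * Q s) (hF' : ∀ s, P s < lam → deriv F s < 0)
    (hD : 0 < D) (hPQ : ∀ s, P s ≤ D * Q s) (hθ : θ ≤ 0)
    (hL : Tendsto P atBot (𝓝 L)) (hlam : lam ≤ L) {z : ℝ} (hz : 0 ≤ deriv P z) :
    lam ≤ D * Q z := by
  by_contra! hzlam
  obtain ⟨μ, hμz, hμlam⟩ := exists_between hzlam
  set S := {s | s ≤ z ∧ μ ≤ P s}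
  have hSne : S.Nonempty := by
    obtain ⟨s, hsμ, hsz⟩ :=
      ((hL.eventually (lt_mem_nhds (hμlam.trans_le hlam))).and (eventually_le_atBot z)).exists
    exact ⟨s, hsz, hsμ.le⟩
  have hSbdd : BddAbove S := ⟨z, fun s hs => hs.1⟩
  have hSclosed : IsClosed S := isClosed_Iic.inter (isClosed_le continuous_const hP.continuous)
  obtain ⟨haz, hPa⟩ : sSup S ≤ z ∧ μ ≤ P (sSup S) := hSclosed.csSup_mem hSne hSbdd
  set a := sSup S
  have hbelow : ∀ s ∈ Ioc a z, P s < μ := fun s hs =>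
    not_le.1 fun h => hs.1.not_ge (le_csSup hSbdd ⟨hs.2, h⟩)
  have haz : a < z := haz.lt_of_ne fun h => (hPQ z).not_gt (hμz.trans_le (h ▸ hPa))
  have hFaz : F z < F a :=
    strictAntiOn_of_deriv_neg (convex_Icc a z) hF.continuous.continuousOn
      (fun s hs => hF' s <| (hbelow s (Ioo_subset_Ioc_self (by rwa [interior_Icc] at hs))).trans
        hμlam)
      (left_mem_Icc.2 haz.le) (right_mem_Icc.2 haz.le) haz
  have hPa' : deriv P a ≤ 0 := deriv_nonpos_of_isMaxOn_Icc haz (hP a) fun s hs =>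
    hs.1.eq_or_lt.elim (fun h => (congrArg P h).ge) fun h => ((hbelow s ⟨h, hs.2⟩).trans_le hPa).le
  have hQza : Q z < Q a := lt_of_mul_lt_mul_left (by linarith [hPQ a]) hD.le
  rw [hFeq, hFeq] at hFaz
  linarith [mul_le_mul_of_nonpos_left hQza.le hθ]

theorem le_of_tendsto_atTop (hP : Differentiable ℝ P) (hF : Differentiable ℝ F)
    (hFeq : ∀ s, F s = deriv P s + θ * Q s) (hF' : ∀ s, P s < lam → deriv F s < 0)
    (hD : 0 < D) (hPQ : ∀ s, P s ≤ D * Q s) (hθ : 0 ≤ θ)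
    (hL : Tendsto P atTop (𝓝 L)) (hlam : lam ≤ L) {z : ℝ} (hz : deriv P z ≤ 0) :
    lam ≤ D * Q z := by
  -- The reflection `s ↦ -s` exchanges `atTop` with `atBot`, `θ` with `-θ` and `F` with `-F(-s)`.
  have hderiv (G : ℝ → ℝ) (s : ℝ) : deriv (fun r => G (-r)) s = -deriv G (-s) :=
    deriv_comp_neg G s
  simpa using le_of_tendsto_atBot (P := fun s => P (-s)) (Q := fun s => Q (-s))
    (F := fun s => -F (-s)) (θ := -θ) (z := -z)
    (hP.comp differentiable_neg) (hF.comp differentiable_neg).neg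
    (fun s => by simp only [hderiv, hFeq]; ring)
    (fun s hs => by simpa [hderiv] using hF' (-s) hs) hD (fun s => hPQ (-s))
    (neg_nonpos.2 hθ) (hL.comp tendsto_neg_atBot_atTop) hlam (by simpa [hderiv] using hz)

theorem lower_bound {dmin dmax Lbot Ltop : ℝ} (hP : Differentiable ℝ P)
    (hF : Differentiable ℝ F) (hFeq : ∀ s, F s = deriv P s + θ * Q s)
    (hF' : ∀ s, P s < lam → deriv F s < 0) (hlam : 0 < lam) (hdmin : 0 < dmin)
    (hdd : dmin ≤ dmax) (hPQ : ∀ s, P s ≤ dmax * Q s) (hQP : ∀ s, dmin * Q s ≤ P s)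
    (hbot : Tendsto P atBot (𝓝 Lbot)) (htop : Tendsto P atTop (𝓝 Ltop))
    (hbot_lam : lam ≤ Lbot) (htop_lam : lam ≤ Ltop) (x : ℝ) : lam * (dmin / dmax) ≤ P x := by
  have hdmax : 0 < dmax := hdmin.trans_le hdd
  rcases le_or_gt lam (P x) with hx | hx
  · exact (mul_le_of_le_one_right hlam.le (div_le_one_of_le₀ hdd hdmax.le)).trans hx
  obtain ⟨z, hz⟩ : ∃ z, ∀ s, P z ≤ P s := hP.continuous.exists_forall_le' x <| by
    rw [cocompact_eq_atBot_atTop]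
    exact eventually_sup.2
      ⟨(hbot.eventually (lt_mem_nhds (hx.trans_le hbot_lam))).mono fun _ => le_of_lt,
        (htop.eventually (lt_mem_nhds (hx.trans_le htop_lam))).mono fun _ => le_of_lt⟩
  have hPz : deriv P z = 0 := IsLocalMin.deriv_eq_zero (Eventually.of_forall hz)
  have hQz : lam ≤ dmax * Q z := by
    rcases le_total θ 0 with hθ | hθ
    · exact le_of_tendsto_atBot hP hF hFeq hF' hdmax hPQ hθ hbot hbot_lam hPz.ge
    · exact le_of_tendsto_atTop hP hF hFeq hF' hdmax hPQ hθ htop htop_lam hPz.le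
  rw [← mul_div_assoc, div_le_iff₀ hdmax]
  calc lam * dmin ≤ dmax * Q z * dmin := by gcongr
    _ = dmax * (dmin * Q z) := by ring
    _ ≤ dmax * P x := by gcongr; exact (hQP z).trans (hz x)
    _ = P x * dmax := mul_comm _ _

end NBarrier

def octantAbovePlane (a b c : ℝ) : Set (ℝ × ℝ × ℝ) :=
  {p | 0 ≤ p.1 ∧ 0 ≤ p.2.1 ∧ 0 ≤ p.2.2 ∧ 1 ≤ p.1 / a + p.2.1 / b + p.2.2 / c}

def octantBelowPlane (a b c : ℝ) : Set (ℝ × ℝ × ℝ) :=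
  {p | 0 < p.1 ∧ 0 < p.2.1 ∧ 0 < p.2.2 ∧ p.1 / a + p.2.1 / b + p.2.2 / c < 1}

theorem min_mul_le_of_mem_octantAbovePlane {α β γ ulow vlow wlow : ℝ} (hα : 0 ≤ α)
    (hβ : 0 ≤ β) (hγ : 0 ≤ γ) (hulow : 0 < ulow) (hvlow : 0 < vlow) (hwlow : 0 < wlow)
    {p : ℝ × ℝ × ℝ} (hp : p ∈ octantAbovePlane ulow vlow wlow) :
    min (α * ulow) (min (β * vlow) (γ * wlow)) ≤ α * p.1 + β * p.2.1 + γ * p.2.2 := by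
  obtain ⟨ha, hb, hc, habc⟩ := hp
  set lam := min (α * ulow) (min (β * vlow) (γ * wlow))
  have hlam : 0 ≤ lam := le_min (by positivity) (le_min (by positivity) (by positivity))
  calc lam ≤ lam * (p.1 / ulow + p.2.1 / vlow + p.2.2 / wlow) := le_mul_of_one_le_right hlam habc
    _ = lam * (p.1 / ulow) + lam * (p.2.1 / vlow) + lam * (p.2.2 / wlow) := by ring
    _ ≤ α * ulow * (p.1 / ulow) + β * vlow * (p.2.1 / vlow) + γ * wlow * (p.2.2 / wlow) := by
      gcongr
      · exact min_le_left _ _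
      · exact (min_le_right _ _).trans (min_le_left _ _)
      · exact (min_le_right _ _).trans (min_le_right _ _)
    _ = α * p.1 + β * p.2.1 + γ * p.2.2 := by field_simp

theorem convex_octantBelowPlane (a b c : ℝ) : Convex ℝ (octantBelowPlane a b c) := by
  refine convex_iff_forall_pos.2
    fun p ⟨hp₁, hp₂, hp₃, hp⟩ q ⟨hq₁, hq₂, hq₃, hq⟩ s t hs ht hst => ?_
  simp only [octantBelowPlane, mem_ofPred_eq, Prod.fst_add, Prod.snd_add, Prod.smul_fst,
    Prod.smul_snd, smul_eq_mul]
  refine ⟨by positivity, by positivity, by positivity, ?_⟩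
  calc (s * p.1 + t * q.1) / a + (s * p.2.1 + t * q.2.1) / b + (s * p.2.2 + t * q.2.2) / c
      = s * (p.1 / a + p.2.1 / b + p.2.2 / c) + t * (q.1 / a + q.2.1 / b + q.2.2 / c) := by ring
    _ < s * 1 + t * 1 := by gcongr
    _ = 1 := by rw [mul_one, mul_one, hst]

theorem IsPreconnected.pos_of_ne_zero {X α : Type*} [TopologicalSpace X] [LinearOrder α]
    [TopologicalSpace α] [OrderClosedTopology α] [Zero α] {s : Set X} {f : X → α}
    (hs : IsPreconnected s) (hf : ContinuousOn f s) (hne : ∀ p ∈ s, f p ≠ 0) {p₀ p : X}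
    (hp₀ : p₀ ∈ s) (h₀ : 0 < f p₀) (hp : p ∈ s) : 0 < f p := by
  by_contra! hle
  obtain ⟨q, hq, hq0⟩ := hs.intermediate_value hp hp₀ hf ⟨hle, h₀.le⟩
  exact hne q hq hq0

theorem pos_of_zeroSet_subset_octantAbovePlane {k : ℝ → ℝ → ℝ → ℝ} {ulow vlow wlow δ : ℝ}
    (hulow : 0 < ulow) (hvlow : 0 < vlow) (hwlow : 0 < wlow)
    (hk : ContinuousOn (fun p : ℝ × ℝ × ℝ => k p.1 p.2.1 p.2.2)
      {p | 0 ≤ p.1 ∧ 0 ≤ p.2.1 ∧ 0 ≤ p.2.2})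
    (hzero : {p : ℝ × ℝ × ℝ | 0 ≤ p.1 ∧ 0 ≤ p.2.1 ∧ 0 ≤ p.2.2 ∧ k p.1 p.2.1 p.2.2 = 0} ⊆
      octantAbovePlane ulow vlow wlow)
    (hδ : 0 < δ) (hsmall : ∀ t, 0 < t → t < δ → 0 < k t t t) {p : ℝ × ℝ × ℝ}
    (hp : p ∈ octantBelowPlane ulow vlow wlow) : 0 < k p.1 p.2.1 p.2.2 := by
  have hS : 0 < 1 / ulow + 1 / vlow + 1 / wlow := by positivity
  obtain ⟨t, ht, htmin⟩ := exists_between (lt_min hδ (one_div_pos.2 hS))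
  have htsum : t / ulow + t / vlow + t / wlow < 1 := calc
    _ = t * (1 / ulow + 1 / vlow + 1 / wlow) := by ring
    _ < 1 := (lt_div_iff₀ hS).1 (htmin.trans_le (min_le_right _ _))
  refine (convex_octantBelowPlane ulow vlow wlow).isPreconnected.pos_of_ne_zero
    (hk.mono fun q hq => ⟨hq.1.le, hq.2.1.le, hq.2.2.1.le⟩) (fun q hq hq0 => ?_)
    (p₀ := (t, t, t)) ⟨ht, ht, ht, htsum⟩ (hsmall t ht (htmin.trans_le (min_le_left _ _))) hp
  exact (hzero ⟨hq.1.le, hq.2.1.le, hq.2.2.1.le, hq0⟩).2.2.2.not_gt hq.2.2.2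

theorem reaction_pos_of_mem_octantBelowPlane {f g h : ℝ → ℝ → ℝ → ℝ} {ulow vlow wlow : ℝ}
    (hulow : 0 < ulow) (hvlow : 0 < vlow) (hwlow : 0 < wlow)
    (hfc : ContinuousOn (fun p : ℝ × ℝ × ℝ => f p.1 p.2.1 p.2.2)
      {p | 0 ≤ p.1 ∧ 0 ≤ p.2.1 ∧ 0 ≤ p.2.2})
    (hgc : ContinuousOn (fun p : ℝ × ℝ × ℝ => g p.1 p.2.1 p.2.2)
      {p | 0 ≤ p.1 ∧ 0 ≤ p.2.1 ∧ 0 ≤ p.2.2})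
    (hhc : ContinuousOn (fun p : ℝ × ℝ × ℝ => h p.1 p.2.1 p.2.2)
      {p | 0 ≤ p.1 ∧ 0 ≤ p.2.1 ∧ 0 ≤ p.2.2})
    (hSf : {p : ℝ × ℝ × ℝ | 0 ≤ p.1 ∧ 0 ≤ p.2.1 ∧ 0 ≤ p.2.2 ∧ f p.1 p.2.1 p.2.2 = 0} ⊆
      octantAbovePlane ulow vlow wlow)
    (hSg : {p : ℝ × ℝ × ℝ | 0 ≤ p.1 ∧ 0 ≤ p.2.1 ∧ 0 ≤ p.2.2 ∧ g p.1 p.2.1 p.2.2 = 0} ⊆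
      octantAbovePlane ulow vlow wlow)
    (hSh : {p : ℝ × ℝ × ℝ | 0 ≤ p.1 ∧ 0 ≤ p.2.1 ∧ 0 ≤ p.2.2 ∧ h p.1 p.2.1 p.2.2 = 0} ⊆
      octantAbovePlane ulow vlow wlow)
    (hsmall : ∃ δ > 0, ∀ u v w : ℝ, 0 < u → u < δ → 0 < v → v < δ → 0 < w → w < δ →
      0 < f u v w ∧ 0 < g u v w ∧ 0 < h u v w)
    {p : ℝ × ℝ × ℝ} (hp : p ∈ octantBelowPlane ulow vlow wlow) :
    0 < f p.1 p.2.1 p.2.2 ∧ 0 < g p.1 p.2.1 p.2.2 ∧ 0 < h p.1 p.2.1 p.2.2 := by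
  obtain ⟨δ, hδ, hδpos⟩ := hsmall
  have hdiag (t : ℝ) (ht : 0 < t) (htδ : t < δ) := hδpos t t t ht htδ ht htδ ht htδ
  exact ⟨pos_of_zeroSet_subset_octantAbovePlane hulow hvlow hwlow hfc hSf hδ
      (fun t ht htδ => (hdiag t ht htδ).1) hp,
    pos_of_zeroSet_subset_octantAbovePlane hulow hvlow hwlow hgc hSg hδ
      (fun t ht htδ => (hdiag t ht htδ).2.1) hp,
    pos_of_zeroSet_subset_octantAbovePlane hulow hvlow hwlow hhc hSh hδ
      (fun t ht htδ => (hdiag t ht htδ).2.2) hp⟩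

def IsBoundaryState (f g h : ℝ → ℝ → ℝ → ℝ) (e : ℝ × ℝ × ℝ) : Prop :=
  (∃ u₁ : ℝ, 0 < u₁ ∧ f u₁ 0 0 = 0 ∧ e = (u₁, 0, 0)) ∨
    (∃ v₂ : ℝ, 0 < v₂ ∧ g 0 v₂ 0 = 0 ∧ e = (0, v₂, 0)) ∨
    (∃ w₃ : ℝ, 0 < w₃ ∧ h 0 0 w₃ = 0 ∧ e = (0, 0, w₃)) ∨
    (∃ us vs ws : ℝ, 0 < us ∧ 0 < vs ∧ 0 < ws ∧
      f us vs ws = 0 ∧ g us vs ws = 0 ∧ h us vs ws = 0 ∧ e = (us, vs, ws))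

theorem IsBoundaryState.mem {f g h : ℝ → ℝ → ℝ → ℝ} {e : ℝ × ℝ × ℝ} {S : Set (ℝ × ℝ × ℝ)}
    (he : IsBoundaryState f g h e)
    (hSf : {p : ℝ × ℝ × ℝ | 0 ≤ p.1 ∧ 0 ≤ p.2.1 ∧ 0 ≤ p.2.2 ∧ f p.1 p.2.1 p.2.2 = 0} ⊆ S)
    (hSg : {p : ℝ × ℝ × ℝ | 0 ≤ p.1 ∧ 0 ≤ p.2.1 ∧ 0 ≤ p.2.2 ∧ g p.1 p.2.1 p.2.2 = 0} ⊆ S)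
    (hSh : {p : ℝ × ℝ × ℝ | 0 ≤ p.1 ∧ 0 ≤ p.2.1 ∧ 0 ≤ p.2.2 ∧ h p.1 p.2.1 p.2.2 = 0} ⊆ S) :
    e ∈ S := by
  rcases he with ⟨u₁, hu₁, hf₁, rfl⟩ | ⟨v₂, hv₂, hg₂, rfl⟩ | ⟨w₃, hw₃, hh₃, rfl⟩ |
    ⟨us, vs, ws, hus, hvs, hws, hfs, -, -, rfl⟩
  · exact hSf ⟨hu₁.le, le_rfl, le_rfl, hf₁⟩
  · exact hSg ⟨le_rfl, hv₂.le, le_rfl, hg₂⟩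
  · exact hSh ⟨le_rfl, le_rfl, hw₃.le, hh₃⟩
  · exact hSf ⟨hus.le, hvs.le, hws.le, hfs⟩

theorem hasDerivAt_flux_s5 {d θ : ℝ} {u k : ℝ → ℝ} (hu : ContDiff ℝ 2 u)
    (heq : ∀ x, d * deriv (deriv u) x + θ * deriv u x + u x * k x = 0) (x : ℝ) :
    HasDerivAt (fun r => d * deriv u r + θ * u r) (-(u x * k x)) x := by
  refine (((hu.differentiable_deriv_two x).hasDerivAt.const_mul d).add
    ((hu.differentiable two_ne_zero x).hasDerivAt.const_mul θ)).congr_deriv ?_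
  linarith [heq x]

theorem hasDerivAt_weighted_flux {d₁ d₂ d₃ θ : ℝ} {u v w k₁ k₂ k₃ : ℝ → ℝ} (a b c : ℝ)
    (hu : ContDiff ℝ 2 u) (hv : ContDiff ℝ 2 v) (hw : ContDiff ℝ 2 w)
    (hueq : ∀ x, d₁ * deriv (deriv u) x + θ * deriv u x + u x * k₁ x = 0)
    (hveq : ∀ x, d₂ * deriv (deriv v) x + θ * deriv v x + v x * k₂ x = 0)
    (hweq : ∀ x, d₃ * deriv (deriv w) x + θ * deriv w x + w x * k₃ x = 0) (x : ℝ) :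
    HasDerivAt
      (fun r => a / d₁ * (d₁ * deriv u r + θ * u r) + b / d₂ * (d₂ * deriv v r + θ * v r)
        + c / d₃ * (d₃ * deriv w r + θ * w r))
      (-(a / d₁ * (u x * k₁ x) + b / d₂ * (v x * k₂ x) + c / d₃ * (w x * k₃ x))) x :=
  ((((hasDerivAt_flux_s5 hu hueq x).const_mul _).add ((hasDerivAt_flux_s5 hv hveq x).const_mul _)).add
    ((hasDerivAt_flux_s5 hw hweq x).const_mul _)).congr_deriv (by ring)

theorem min_mul_le_div_add_div_add_div {d₁ d₂ d₃ a b c : ℝ} (hd₁ : 0 < d₁) (hd₂ : 0 < d₂)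
    (hd₃ : 0 < d₃) (ha : 0 ≤ a) (hb : 0 ≤ b) (hc : 0 ≤ c) :
    min d₁ (min d₂ d₃) * (a / d₁ + b / d₂ + c / d₃) ≤ a + b + c := by
  calc min d₁ (min d₂ d₃) * (a / d₁ + b / d₂ + c / d₃)
      = min d₁ (min d₂ d₃) * (a / d₁) + min d₁ (min d₂ d₃) * (b / d₂)
        + min d₁ (min d₂ d₃) * (c / d₃) := by ring
    _ ≤ d₁ * (a / d₁) + d₂ * (b / d₂) + d₃ * (c / d₃) := by
      gcongr
      · exact min_le_left _ _
      · exact (min_le_right _ _).trans (min_le_left _ _)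
      · exact (min_le_right _ _).trans (min_le_right _ _)
    _ = a + b + c := by field_simp

theorem le_max_mul_div_add_div_add_div {d₁ d₂ d₃ a b c : ℝ} (hd₁ : 0 < d₁) (hd₂ : 0 < d₂)
    (hd₃ : 0 < d₃) (ha : 0 ≤ a) (hb : 0 ≤ b) (hc : 0 ≤ c) :
    a + b + c ≤ max d₁ (max d₂ d₃) * (a / d₁ + b / d₂ + c / d₃) := by
  calc a + b + c = d₁ * (a / d₁) + d₂ * (b / d₂) + d₃ * (c / d₃) := by field_simp
    _ ≤ max d₁ (max d₂ d₃) * (a / d₁) + max d₁ (max d₂ d₃) * (b / d₂)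
        + max d₁ (max d₂ d₃) * (c / d₃) := by
      gcongr
      · exact le_max_left _ _
      · exact (le_max_left _ _).trans (le_max_right _ _)
      · exact (le_max_right _ _).trans (le_max_right _ _)
    _ = max d₁ (max d₂ d₃) * (a / d₁ + b / d₂ + c / d₃) := by ring

theorem NBMP_three_equations_lower_bound_general
    (d₁ d₂ d₃ θ : ℝ) (hd₁ : 0 < d₁) (hd₂ : 0 < d₂) (hd₃ : 0 < d₃)
    (ubar ulow vbar vlow wbar wlow : ℝ)
    (hulow : 0 < ulow)
    (hvlow : 0 < vlow)
    (hwlow : 0 < wlow)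
    (PH : Set (ℝ × ℝ × ℝ))
    (hPH : PH = {p : ℝ × ℝ × ℝ | 0 ≤ p.1 ∧ 0 ≤ p.2.1 ∧ 0 ≤ p.2.2 ∧
      1 ≤ p.1 / ulow + p.2.1 / vlow + p.2.2 / wlow ∧
      p.1 / ubar + p.2.1 / vbar + p.2.2 / wbar ≤ 1})
    (f g h : ℝ → ℝ → ℝ → ℝ)
    (hfc : ContinuousOn (fun p : ℝ × ℝ × ℝ => f p.1 p.2.1 p.2.2)
      {p | 0 ≤ p.1 ∧ 0 ≤ p.2.1 ∧ 0 ≤ p.2.2})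
    (hgc : ContinuousOn (fun p : ℝ × ℝ × ℝ => g p.1 p.2.1 p.2.2)
      {p | 0 ≤ p.1 ∧ 0 ≤ p.2.1 ∧ 0 ≤ p.2.2})
    (hhc : ContinuousOn (fun p : ℝ × ℝ × ℝ => h p.1 p.2.1 p.2.2)
      {p | 0 ≤ p.1 ∧ 0 ≤ p.2.1 ∧ 0 ≤ p.2.2})
    (hSf : {p : ℝ × ℝ × ℝ | 0 ≤ p.1 ∧ 0 ≤ p.2.1 ∧ 0 ≤ p.2.2 ∧ f p.1 p.2.1 p.2.2 = 0} ⊆ PH)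
    (hSg : {p : ℝ × ℝ × ℝ | 0 ≤ p.1 ∧ 0 ≤ p.2.1 ∧ 0 ≤ p.2.2 ∧ g p.1 p.2.1 p.2.2 = 0} ⊆ PH)
    (hSh : {p : ℝ × ℝ × ℝ | 0 ≤ p.1 ∧ 0 ≤ p.2.1 ∧ 0 ≤ p.2.2 ∧ h p.1 p.2.1 p.2.2 = 0} ⊆ PH)
    (hsmall : ∃ δ > 0, ∀ u v w : ℝ, 0 < u → u < δ → 0 < v → v < δ → 0 < w → w < δ →
      0 < f u v w ∧ 0 < g u v w ∧ 0 < h u v w)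
    (u v w : ℝ → ℝ)
    (hu : ContDiff ℝ 2 u) (hv : ContDiff ℝ 2 v) (hw : ContDiff ℝ 2 w)
    (hupos : ∀ x, 0 < u x) (hvpos : ∀ x, 0 < v x) (hwpos : ∀ x, 0 < w x)
    (hueq : ∀ x, d₁ * deriv (deriv u) x + θ * deriv u x
      + u x * f (u x) (v x) (w x) = 0)
    (hveq : ∀ x, d₂ * deriv (deriv v) x + θ * deriv v x
      + v x * g (u x) (v x) (w x) = 0)
    (hweq : ∀ x, d₃ * deriv (deriv w) x + θ * deriv w x
      + w x * h (u x) (v x) (w x) = 0)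
    (eminus eplus : ℝ × ℝ × ℝ)
    (hlimminus : Tendsto (fun x => (u x, v x, w x)) atBot (nhds eminus))
    (hlimplus : Tendsto (fun x => (u x, v x, w x)) atTop (nhds eplus))
    (heminus : (∃ u₁ : ℝ, 0 < u₁ ∧ f u₁ 0 0 = 0 ∧ eminus = (u₁, 0, 0)) ∨
      (∃ v₂ : ℝ, 0 < v₂ ∧ g 0 v₂ 0 = 0 ∧ eminus = (0, v₂, 0)) ∨
      (∃ w₃ : ℝ, 0 < w₃ ∧ h 0 0 w₃ = 0 ∧ eminus = (0, 0, w₃)) ∨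
      (∃ us vs ws : ℝ, 0 < us ∧ 0 < vs ∧ 0 < ws ∧
        f us vs ws = 0 ∧ g us vs ws = 0 ∧ h us vs ws = 0 ∧ eminus = (us, vs, ws)))
    (heplus : (∃ u₁ : ℝ, 0 < u₁ ∧ f u₁ 0 0 = 0 ∧ eplus = (u₁, 0, 0)) ∨
      (∃ v₂ : ℝ, 0 < v₂ ∧ g 0 v₂ 0 = 0 ∧ eplus = (0, v₂, 0)) ∨
      (∃ w₃ : ℝ, 0 < w₃ ∧ h 0 0 w₃ = 0 ∧ eplus = (0, 0, w₃)) ∨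
      (∃ us vs ws : ℝ, 0 < us ∧ 0 < vs ∧ 0 < ws ∧
        f us vs ws = 0 ∧ g us vs ws = 0 ∧ h us vs ws = 0 ∧ eplus = (us, vs, ws)))
    (α β γ : ℝ) (hα : 0 < α) (hβ : 0 < β) (hγ : 0 < γ) (x : ℝ) :
    min (α * ulow) (min (β * vlow) (γ * wlow)) *
        (min d₁ (min d₂ d₃) / max d₁ (max d₂ d₃)) ≤
      α * u x + β * v x + γ * w x := by
  have hlow : PH ⊆ octantAbovePlane ulow vlow wlow :=
    hPH ▸ fun p hp => ⟨hp.1, hp.2.1, hp.2.2.1, hp.2.2.2.1⟩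
  have hlam {p : ℝ × ℝ × ℝ} (hp : p ∈ octantAbovePlane ulow vlow wlow) :=
    min_mul_le_of_mem_octantAbovePlane hα.le hβ.le hγ.le hulow hvlow hwlow hp
  have hP (s : ℝ) : HasDerivAt (fun r => α * u r + β * v r + γ * w r)
      (α * deriv u s + β * deriv v s + γ * deriv w s) s :=
    (((hu.differentiable two_ne_zero s).hasDerivAt.const_mul α).add
      ((hv.differentiable two_ne_zero s).hasDerivAt.const_mul β)).add
      ((hw.differentiable two_ne_zero s).hasDerivAt.const_mul γ)
  have hF := hasDerivAt_weighted_flux α β γ hu hv hw hueq hveq hweq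
  have hcont : Continuous fun p : ℝ × ℝ × ℝ => α * p.1 + β * p.2.1 + γ * p.2.2 := by fun_prop
  refine NBarrier.lower_bound (θ := θ) (Q := fun s => α * u s / d₁ + β * v s / d₂ + γ * w s / d₃)
    (fun s => (hP s).differentiableAt) (fun s => (hF s).differentiableAt)
    (fun s => by rw [(hP s).deriv]; field_simp; ring) (fun s hs => ?_)
    (lt_min (by positivity) (lt_min (by positivity) (by positivity)))
    (lt_min hd₁ (lt_min hd₂ hd₃)) ((min_le_left _ _).trans (le_max_left _ _))
    (fun s => le_max_mul_div_add_div_add_div hd₁ hd₂ hd₃ (mul_pos hα (hupos s)).le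
      (mul_pos hβ (hvpos s)).le (mul_pos hγ (hwpos s)).le)
    (fun s => min_mul_le_div_add_div_add_div hd₁ hd₂ hd₃ (mul_pos hα (hupos s)).le
      (mul_pos hβ (hvpos s)).le (mul_pos hγ (hwpos s)).le)
    ((hcont.tendsto _).comp hlimminus) ((hcont.tendsto _).comp hlimplus)
    (hlam (hlow (IsBoundaryState.mem heminus hSf hSg hSh)))
    (hlam (hlow (IsBoundaryState.mem heplus hSf hSg hSh))) x
  obtain ⟨hfs, hgs, hhs⟩ := reaction_pos_of_mem_octantBelowPlane (p := (u s, v s, w s))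
    hulow hvlow hwlow hfc hgc hhc (hSf.trans hlow) (hSg.trans hlow) (hSh.trans hlow) hsmall
    ⟨hupos s, hvpos s, hwpos s, not_le.1 fun h1 =>
      hs.not_ge (hlam ⟨(hupos s).le, (hvpos s).le, (hwpos s).le, h1⟩)⟩
  rw [(hF s).deriv]
  exact neg_neg_of_pos <| add_pos
    (add_pos (mul_pos (div_pos hα hd₁) (mul_pos (hupos s) hfs))
      (mul_pos (div_pos hβ hd₂) (mul_pos (hvpos s) hgs)))
    (mul_pos (div_pos hγ hd₃) (mul_pos (hwpos s) hhs))

/-- N-barrier maximum principle for systems of three equations,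
lower bound. -/
theorem NBMP_three_equations_lower_bound
    (d₁ d₂ d₃ θ : ℝ) (hd₁ : 0 < d₁) (hd₂ : 0 < d₂) (hd₃ : 0 < d₃)
    (ubar ulow vbar vlow wbar wlow : ℝ)
    (hulow : 0 < ulow) (huu : ulow < ubar)
    (hvlow : 0 < vlow) (hvv : vlow < vbar)
    (hwlow : 0 < wlow) (hww : wlow < wbar)
    (PH : Set (ℝ × ℝ × ℝ))
    (hPH : PH = {p : ℝ × ℝ × ℝ | 0 ≤ p.1 ∧ 0 ≤ p.2.1 ∧ 0 ≤ p.2.2 ∧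
      1 ≤ p.1 / ulow + p.2.1 / vlow + p.2.2 / wlow ∧
      p.1 / ubar + p.2.1 / vbar + p.2.2 / wbar ≤ 1})
    (f g h : ℝ → ℝ → ℝ → ℝ)
    (hfc : ContinuousOn (fun p : ℝ × ℝ × ℝ => f p.1 p.2.1 p.2.2)
      {p | 0 ≤ p.1 ∧ 0 ≤ p.2.1 ∧ 0 ≤ p.2.2})
    (hgc : ContinuousOn (fun p : ℝ × ℝ × ℝ => g p.1 p.2.1 p.2.2)
      {p | 0 ≤ p.1 ∧ 0 ≤ p.2.1 ∧ 0 ≤ p.2.2})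
    (hhc : ContinuousOn (fun p : ℝ × ℝ × ℝ => h p.1 p.2.1 p.2.2)
      {p | 0 ≤ p.1 ∧ 0 ≤ p.2.1 ∧ 0 ≤ p.2.2})
    (hSf : {p : ℝ × ℝ × ℝ | 0 ≤ p.1 ∧ 0 ≤ p.2.1 ∧ 0 ≤ p.2.2 ∧ f p.1 p.2.1 p.2.2 = 0} ⊆ PH)
    (hSg : {p : ℝ × ℝ × ℝ | 0 ≤ p.1 ∧ 0 ≤ p.2.1 ∧ 0 ≤ p.2.2 ∧ g p.1 p.2.1 p.2.2 = 0} ⊆ PH)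
    (hSh : {p : ℝ × ℝ × ℝ | 0 ≤ p.1 ∧ 0 ≤ p.2.1 ∧ 0 ≤ p.2.2 ∧ h p.1 p.2.1 p.2.2 = 0} ⊆ PH)
    (hsmall : ∃ δ > 0, ∀ u v w : ℝ, 0 < u → u < δ → 0 < v → v < δ → 0 < w → w < δ →
      0 < f u v w ∧ 0 < g u v w ∧ 0 < h u v w)
    (hlarge : ∃ M > 0, ∀ u v w : ℝ, M < u → M < v → M < w →
      f u v w < 0 ∧ g u v w < 0 ∧ h u v w < 0)
    (u v w : ℝ → ℝ)
    (hu : ContDiff ℝ 2 u) (hv : ContDiff ℝ 2 v) (hw : ContDiff ℝ 2 w)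
    (hupos : ∀ x, 0 < u x) (hvpos : ∀ x, 0 < v x) (hwpos : ∀ x, 0 < w x)
    (hueq : ∀ x, d₁ * deriv (deriv u) x + θ * deriv u x
      + u x * f (u x) (v x) (w x) = 0)
    (hveq : ∀ x, d₂ * deriv (deriv v) x + θ * deriv v x
      + v x * g (u x) (v x) (w x) = 0)
    (hweq : ∀ x, d₃ * deriv (deriv w) x + θ * deriv w x
      + w x * h (u x) (v x) (w x) = 0)
    (eminus eplus : ℝ × ℝ × ℝ)
    (hlimminus : Tendsto (fun x => (u x, v x, w x)) atBot (nhds eminus))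
    (hlimplus : Tendsto (fun x => (u x, v x, w x)) atTop (nhds eplus))
    (heminus : (∃ u₁ : ℝ, 0 < u₁ ∧ f u₁ 0 0 = 0 ∧ eminus = (u₁, 0, 0)) ∨
      (∃ v₂ : ℝ, 0 < v₂ ∧ g 0 v₂ 0 = 0 ∧ eminus = (0, v₂, 0)) ∨
      (∃ w₃ : ℝ, 0 < w₃ ∧ h 0 0 w₃ = 0 ∧ eminus = (0, 0, w₃)) ∨
      (∃ us vs ws : ℝ, 0 < us ∧ 0 < vs ∧ 0 < ws ∧
        f us vs ws = 0 ∧ g us vs ws = 0 ∧ h us vs ws = 0 ∧ eminus = (us, vs, ws)))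
    (heplus : (∃ u₁ : ℝ, 0 < u₁ ∧ f u₁ 0 0 = 0 ∧ eplus = (u₁, 0, 0)) ∨
      (∃ v₂ : ℝ, 0 < v₂ ∧ g 0 v₂ 0 = 0 ∧ eplus = (0, v₂, 0)) ∨
      (∃ w₃ : ℝ, 0 < w₃ ∧ h 0 0 w₃ = 0 ∧ eplus = (0, 0, w₃)) ∨
      (∃ us vs ws : ℝ, 0 < us ∧ 0 < vs ∧ 0 < ws ∧
        f us vs ws = 0 ∧ g us vs ws = 0 ∧ h us vs ws = 0 ∧ eplus = (us, vs, ws)))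
    (α β γ : ℝ) (hα : 0 < α) (hβ : 0 < β) (hγ : 0 < γ) (x : ℝ) :
    min (α * ulow) (min (β * vlow) (γ * wlow)) *
        (min d₁ (min d₂ d₃) / max d₁ (max d₂ d₃)) ≤
      α * u x + β * v x + γ * w x :=
  NBMP_three_equations_lower_bound_general d₁ d₂ d₃ θ hd₁ hd₂ hd₃ ubar ulow vbar vlow wbar wlow
    hulow hvlow hwlow PH hPH f g h hfc hgc hhc hSf hSg hSh hsmall u v w hu hv hw hupos hvpos hwpos
    hueq hveq hweq eminus eplus hlimminus hlimplus heminus heplus α β γ hα hβ hγ x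
end
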